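/- arXiv:2011.05555 — 10 statements merged into one kernel-verified Lean document; each statement's English description precedes it below -/
import Mathlib

section
/- Let δ ∈ (0,1) be a real number and let n, N, ℓ, k be positive integers with N ≥ 10·k·n^{(1−δ)ℓ} and k ≥ 20. Let G be a simple graph on vertex set Fin n that contains a clique of size ⌈n^δ⌉. Sample N independent uniformly random functions f_1,…,f_N : Fin ℓ → Fin n, let S_i be the image of f_i, and let G' be the graph on vertex set Fin N in which distinct i, j are adjacent iff S_i ∪ S_j is a clique in G. Then the probability that G' contains a clique of size k is at least 0.9. -/
/-!
Let `C` be a clique of `G` with `|C| ≥ n^δ`. Call `i` good if `f i` maps into `C`; any two good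
indices are adjacent in `G'`, so it suffices that at least `k` indices are good. The number of good
indices is a sum of `N` independent indicators, each with mean `p = (|C| / n)^ℓ`, so its mean is
`μ = N p ≥ 10 k ≥ 200` and its variance is at most `μ`. By Chebyshev's inequality fewer than `k`
indices are good with probability at most `μ / (μ - k)^2 ≤ 1/10`, since `(μ - k)^2 ≥ (0.9 μ)^2 ≥ 10 μ`.
-/

open Finset

section

variable {ι A : Type*} [Fintype ι] [DecidableEq ι] [Fintype A]

theorem card_mul_sum_comp_eval (F : A → ℝ) (i : ι) :
    Fintype.card A * ∑ f : ι → A, F (f i) = Fintype.card A ^ Fintype.card ι * ∑ a, F a := by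
  have hι : 0 < Fintype.card ι := Fintype.card_pos_iff.mpr ⟨i⟩
  rw [← Fintype.piFinset_univ, Fintype.sum_piFinset_apply, card_univ, nsmul_eq_mul, ← mul_assoc]
  push_cast
  rw [← pow_succ', Nat.sub_add_cancel hι]

theorem sum_comp_eval_mul_comp_eval_eq_zero {g : A → ℝ} (hg : ∑ a, g a = 0) (h : A → ℝ)
    {i j : ι} (hji : j ≠ i) : ∑ f : ι → A, g (f i) * h (f j) = 0 := by
  rw [← (Equiv.funSplitAt i A).symm.sum_comp, Fintype.sum_prod_type]
  simp only [Equiv.funSplitAt_symm_apply, hji, dite_true, dite_false]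
  rw [← Finset.sum_mul_sum, hg, zero_mul]

theorem card_mul_sum_sq_sum_comp_eval {g : A → ℝ} (hg : ∑ a, g a = 0) :
    Fintype.card A * ∑ f : ι → A, (∑ i, g (f i)) ^ 2
      = Fintype.card ι * Fintype.card A ^ Fintype.card ι * ∑ a, g a ^ 2 := by
  have diagonal (i : ι) : ∑ j, ∑ f : ι → A, g (f i) * g (f j) = ∑ f : ι → A, g (f i) ^ 2 := by
    rw [Finset.sum_eq_single_of_mem i (mem_univ i)
      fun j _ hji => sum_comp_eval_mul_comp_eval_eq_zero hg g hji]
    simp only [sq]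
  simp_rw [sq (∑ i, _), Finset.sum_mul_sum]
  rw [Finset.sum_comm, Finset.sum_congr rfl fun i _ => Finset.sum_comm, Finset.mul_sum]
  simp only [diagonal]
  rw [Finset.sum_congr rfl fun i _ => card_mul_sum_comp_eval (fun a => g a ^ 2) i, sum_const,
    card_univ, nsmul_eq_mul, mul_assoc]

variable [DecidableEq A] [Nonempty A]

theorem sum_sq_card_filter_mem_sub_le (s : Finset A) :
    ∑ f : ι → A, ((#{i | f i ∈ s} : ℝ) - Fintype.card ι * #s / Fintype.card A) ^ 2
      ≤ Fintype.card A ^ Fintype.card ι * (Fintype.card ι * #s / Fintype.card A) := by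
  have hA : (0 : ℝ) < Fintype.card A := by exact_mod_cast Fintype.card_pos
  set p : ℝ := #s / Fintype.card A with hp
  set g : A → ℝ := fun a => (if a ∈ s then 1 else 0) - p
  have centred (f : ι → A) :
      (#{i | f i ∈ s} : ℝ) - Fintype.card ι * #s / Fintype.card A = ∑ i, g (f i) := by
    simp only [g, sum_sub_distrib, sum_boole, sum_const, card_univ, nsmul_eq_mul, mul_div_assoc, hp]
  have hg : ∑ a, g a = 0 := by
    simp only [g, sum_sub_distrib, sum_boole, filter_mem_eq_inter, univ_inter, sum_const,
      card_univ, nsmul_eq_mul, hp]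
    field_simp
    ring
  have hg_sq : ∑ a, g a ^ 2 = #s * (1 - p) := by
    have (a : A) : g a ^ 2 = (1 - 2 * p) * (if a ∈ s then 1 else 0) + p ^ 2 := by
      simp only [g]; split_ifs <;> ring
    simp only [this, sum_add_distrib, ← mul_sum, sum_boole, filter_mem_eq_inter, univ_inter,
      sum_const, card_univ, nsmul_eq_mul, hp]
    field_simp
    ring
  refine le_of_mul_le_mul_left ?_ hA
  simp_rw [centred]
  rw [card_mul_sum_sq_sum_comp_eval hg, hg_sq]
  calc _ ≤ (Fintype.card ι * Fintype.card A ^ Fintype.card ι : ℝ) * (#s * 1) := by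
        gcongr
        exact sub_le_self 1 (by positivity)
    _ = _ := by field_simp

theorem card_filter_card_lt_mul_sq_le (s : Finset A) {k : ℕ}
    (hk : k ≤ Fintype.card ι * #s / (Fintype.card A : ℝ)) :
    (#{f : ι → A | #{i | f i ∈ s} < k} : ℝ) * (Fintype.card ι * #s / Fintype.card A - k) ^ 2
      ≤ Fintype.card A ^ Fintype.card ι * (Fintype.card ι * #s / Fintype.card A) := by
  set μ : ℝ := Fintype.card ι * #s / Fintype.card A
  calc _ = ∑ f ∈ {f : ι → A | #{i | f i ∈ s} < k}, (μ - k) ^ 2 := by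
        rw [sum_const, nsmul_eq_mul]
    _ ≤ ∑ f ∈ {f : ι → A | #{i | f i ∈ s} < k}, ((#{i | f i ∈ s} : ℝ) - μ) ^ 2 := by
        refine sum_le_sum fun f hf => ?_
        have hlt : (#{i | f i ∈ s} : ℝ) < k := by exact_mod_cast (mem_filter.1 hf).2
        nlinarith
    _ ≤ ∑ f : ι → A, ((#{i | f i ∈ s} : ℝ) - μ) ^ 2 :=
        sum_le_sum_of_subset_of_nonneg (subset_univ _) fun _ _ _ => sq_nonneg _
    _ ≤ _ := sum_sq_card_filter_mem_sub_le s

theorem nine_tenths_mul_card_le_card_filter_le_card (s : Finset A) {k : ℕ} (hk : 20 ≤ k)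
    (hμ : 10 * k ≤ Fintype.card ι * #s / (Fintype.card A : ℝ)) :
    0.9 * (Fintype.card A : ℝ) ^ Fintype.card ι ≤ #{f : ι → A | k ≤ #{i | f i ∈ s}} := by
  have hk_real : (20 : ℝ) ≤ k := by exact_mod_cast hk
  have hbad := card_filter_card_lt_mul_sq_le s (k := k)
    ((by linarith : (k : ℝ) ≤ 10 * k).trans hμ)
  generalize (Fintype.card ι * #s / Fintype.card A : ℝ) = μ at hμ hbad
  have hsplit := card_filter_add_card_filter_not (s := (univ : Finset (ι → A)))
    fun f => k ≤ #{i | f i ∈ s}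
  simp only [not_le, card_univ, Fintype.card_fun] at hsplit
  replace hsplit : (#{f : ι → A | k ≤ #{i | f i ∈ s}} + #{f : ι → A | #{i | f i ∈ s} < k} : ℝ)
      = Fintype.card A ^ Fintype.card ι := by exact_mod_cast hsplit
  have hvar : 10 * μ ≤ (μ - k) ^ 2 := by nlinarith
  have hbad_le : (#{f : ι → A | #{i | f i ∈ s} < k} : ℝ) * 10
      ≤ Fintype.card A ^ Fintype.card ι := by
    nlinarith [hbad, hvar]
  norm_num
  linarith

end

namespace SimpleGraph

variable {V ι : Type*} [DecidableEq V]

/-- The graph `G'` of the randomized graph product, with `S i` the image of `f i`. -/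
def cliqueUnionGraph (G : SimpleGraph V) (S : ι → Finset V) : SimpleGraph ι :=
  fromRel fun i j => G.IsClique (↑(S i ∪ S j) : Set V)

theorem IsClique.isClique_cliqueUnionGraph {G : SimpleGraph V} {C : Set V} (hC : G.IsClique C)
    {S : ι → Finset V} {T : Set ι} (hT : ∀ i ∈ T, ↑(S i) ⊆ C) :
    (G.cliqueUnionGraph S).IsClique T := fun i hi j hj hij =>
  (fromRel_adj _ i j).2 ⟨hij, Or.inl (hC.subset (by simp [hT i hi, hT j hj]))⟩

theorem IsClique.exists_isNClique_cliqueUnionGraph [Fintype ι]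
    {G : SimpleGraph V} {C : Finset V} (hC : G.IsClique (C : Set V)) (S : ι → Finset V) {k : ℕ}
    (hk : k ≤ #{i | S i ⊆ C}) : ∃ T, (G.cliqueUnionGraph S).IsNClique k T := by
  obtain ⟨T, hTC, rfl⟩ := exists_subset_card_eq hk
  refine ⟨T, ⟨hC.isClique_cliqueUnionGraph fun i hi => ?_, rfl⟩⟩
  exact_mod_cast (mem_filter.1 (hTC hi)).2

end SimpleGraph

theorem le_mul_pow_div_pow {x c N k δ : ℝ} {ℓ : ℕ} (hx : 0 < x) (hc : x ^ δ ≤ c) (hk : 0 ≤ k)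
    (hN : k * x ^ ((1 - δ) * ℓ) ≤ N) : k ≤ N * c ^ ℓ / x ^ ℓ := by
  rw [le_div_iff₀ (by positivity)]
  calc k * x ^ ℓ = k * x ^ ((1 - δ) * ℓ) * (x ^ δ) ^ ℓ := by
        rw [mul_assoc, ← Real.rpow_mul_natCast hx.le, ← Real.rpow_add hx, ← Real.rpow_natCast]
        ring_nf
    _ ≤ N * c ^ ℓ := by gcongr; exact le_trans (by positivity) hN

theorem stmt_0_general (δ : ℝ)
    (n N ℓ k : ℕ) (hn : 0 < n) (hk : 20 ≤ k)
    (hNlb : (N : ℝ) ≥ 10 * k * (n : ℝ) ^ ((1 - δ) * ℓ))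
    (G : SimpleGraph (Fin n))
    (hclique : ∃ S : Finset (Fin n), G.IsNClique ⌈(n : ℝ) ^ δ⌉₊ S) :
    ((Nat.card {f : Fin N → Fin ℓ → Fin n //
        ∃ S : Finset (Fin N),
          (SimpleGraph.fromRel (fun i j =>
            G.IsClique ((Finset.image (f i) Finset.univ ∪ Finset.image (f j) Finset.univ :
              Finset (Fin n)) : Set (Fin n)))).IsNClique k S} : ℝ)
      / (Nat.card (Fin N → Fin ℓ → Fin n) : ℝ)) ≥ 0.9 := by
  classical
  obtain ⟨C, hC⟩ := hclique
  have : Nonempty (Fin n) := Fin.pos_iff_nonempty.mp hn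
  have hmean : 10 * k ≤ Fintype.card (Fin N) * #(Fintype.piFinset fun _ : Fin ℓ => C)
      / (Fintype.card (Fin ℓ → Fin n) : ℝ) := by
    simp only [Fintype.card_fin, Fintype.card_fun, Fintype.card_piFinset, prod_const, card_univ]
    push_cast
    refine le_mul_pow_div_pow (by exact_mod_cast hn) ?_ (by positivity) hNlb
    exact hC.card_eq ▸ Nat.le_ceil _
  have hgood : #{f : Fin N → Fin ℓ → Fin n | k ≤ #{i | f i ∈ Fintype.piFinset fun _ => C}}
      ≤ Nat.card {f : Fin N → Fin ℓ → Fin n //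
          ∃ S, (G.cliqueUnionGraph fun i => image (f i) univ).IsNClique k S} := by
    rw [Nat.card_eq_fintype_card, Fintype.card_subtype]
    refine card_le_card fun f hf =>
      mem_filter.2 ⟨mem_univ f, hC.isClique.exists_isNClique_cliqueUnionGraph _ ?_⟩
    simpa [image_subset_iff] using (mem_filter.1 hf).2
  rw [ge_iff_le, le_div_iff₀ (mod_cast Nat.card_pos), Nat.card_eq_fintype_card,
    Fintype.card_fun, Nat.cast_pow]
  exact (nine_tenths_mul_card_le_card_filter_le_card _ hk hmean).trans (Nat.cast_le.mpr hgood)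

/-- **Completeness of the randomized graph product.**
If `G` on `Fin n` contains a clique of size `⌈n^δ⌉`, `N ≥ 10·k·n^((1-δ)ℓ)` and `k ≥ 20`,
then with probability at least `0.9` over the choice of `N` independent uniformly random
functions `f i : Fin ℓ → Fin n` (with `S i` the image of `f i`), the graph `G'` on `Fin N`
where distinct `i, j` are adjacent iff `S i ∪ S j` is a clique in `G` contains a `k`-clique. -/
theorem stmt_0 (δ : ℝ) (hδ : δ ∈ Set.Ioo (0 : ℝ) 1)
    (n N ℓ k : ℕ) (hn : 0 < n) (hN : 0 < N) (hℓ : 0 < ℓ) (hk : 20 ≤ k)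
    (hNlb : (N : ℝ) ≥ 10 * k * (n : ℝ) ^ ((1 - δ) * ℓ))
    (G : SimpleGraph (Fin n))
    (hclique : ∃ S : Finset (Fin n), G.IsNClique ⌈(n : ℝ) ^ δ⌉₊ S) :
    ((Nat.card {f : Fin N → Fin ℓ → Fin n //
        ∃ S : Finset (Fin N),
          (SimpleGraph.fromRel (fun i j =>
            G.IsClique ((Finset.image (f i) Finset.univ ∪ Finset.image (f j) Finset.univ :
              Finset (Fin n)) : Set (Fin n)))).IsNClique k S} : ℝ)
      / (Nat.card (Fin N → Fin ℓ → Fin n) : ℝ)) ≥ 0.9 :=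
  stmt_0_general δ n N ℓ k hn hk hNlb G hclique
end

section
/- Let δ ∈ (0,1) be a real number and let n, N, ℓ be positive integers with N ≤ 1000·ℓ·n^{(1−δ)ℓ} and ℓ ≥ 20. Sample N independent uniformly random functions f_1,…,f_N : Fin ℓ → Fin n and let S_i be the image of f_i. Then with probability at least 0.95, the following holds: for every nonempty subset M ⊆ Fin N with |M| ≤ n^{0.99δ}/ℓ, the union ∪_{i∈M} S_i has cardinality at least 0.01·δ·|M|·ℓ. -/
/-!
Union bound over the admissible sets `M`. The images of `f i`, `i ∈ M`, cover at most
`k = ⌊0.01 δ |M| ℓ⌋` points only if they all lie in one `k`-subset `T` of `Fin n`, so this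
happens for a fraction at most `C(n, k) (k / n) ^ (ℓ |M|)` of all choices of `f`. Using
`C(n, k) ≤ n ^ k` and `|M| ℓ ≤ n ^ (0.99 δ)`, this is at most `r ^ |M|` with
`r = (0.01 δ) ^ ℓ n ^ ((δ - 1) ℓ)`. Summing over nonempty `M` gives at most
`(1 + r) ^ N - 1 ≤ e ^ (N r) - 1 ≤ 2 N r`, and the bound on `N` makes `N r ≤ 0.025`.
-/

open Finset Real

theorem card_filter_le_sum_card_filter {Ω ι : Type*} [Fintype Ω] {p : Ω → Prop}
    [DecidablePred p] {q : ι → Ω → Prop} [∀ i, DecidablePred (q i)] (s : Finset ι)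
    (h : ∀ ω, p ω → ∃ i ∈ s, q i ω) : #{ω | p ω} ≤ ∑ i ∈ s, #{ω | q i ω} := by
  classical
  calc #{ω | p ω} ≤ #(s.biUnion fun i => {ω | q i ω}) := card_le_card fun ω hω => by
        simpa using h ω (mem_filter.1 hω).2
    _ ≤ _ := card_biUnion_le

theorem one_sub_le_card_subtype_div_card {Ω : Type*} [Fintype Ω] [Nonempty Ω] (p : Ω → Prop)
    [DecidablePred p] {ε : ℝ} (h : (#{ω | ¬ p ω} : ℝ) ≤ ε * Fintype.card Ω) :
    1 - ε ≤ Nat.card {ω // p ω} / Nat.card Ω := by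
  have hsplit : (#{ω | p ω} : ℝ) + #{ω | ¬ p ω} = Fintype.card Ω := by
    exact_mod_cast card_filter_add_card_filter_not p
  rw [Nat.card_eq_fintype_card, Nat.card_eq_fintype_card, Fintype.card_subtype,
    le_div_iff₀ (by exact_mod_cast Fintype.card_pos)]
  linarith

section Counting

variable {ι α β : Type*} [Fintype ι] [DecidableEq ι] [Fintype α] [DecidableEq α] [Fintype β]
  [DecidableEq β]

theorem card_filter_biUnion_image_subset (M : Finset ι) (T : Finset β) :
    #{f : ι → α → β | M.biUnion (fun i => univ.image (f i)) ⊆ T} =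
      (#T ^ Fintype.card α) ^ #M * (Fintype.card β ^ Fintype.card α) ^ (Fintype.card ι - #M) := by
  have hpi : ({f : ι → α → β | M.biUnion (fun i => univ.image (f i)) ⊆ T} : Finset _) =
      Fintype.piFinset fun i => if i ∈ M then Fintype.piFinset fun _ => T else univ := by
    ext f
    simp only [mem_filter, mem_univ, true_and, biUnion_subset, image_subset_iff,
      Fintype.mem_piFinset]
    refine forall_congr' fun i => ?_
    split_ifs with hi <;> simp [hi]
  rw [hpi, Fintype.card_piFinset]
  simp only [apply_ite card, Fintype.card_piFinset, prod_const, card_univ, Fintype.card_fun]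
  rw [prod_ite, prod_const, prod_const, filter_mem_eq_inter, univ_inter, filter_not,
    filter_mem_eq_inter, univ_inter, ← compl_eq_univ_sdiff, card_compl]

theorem card_filter_card_biUnion_image_le (M : Finset ι) {k : ℕ} (hk : k ≤ Fintype.card β) :
    #{f : ι → α → β | #(M.biUnion fun i => univ.image (f i)) ≤ k} ≤
      (Fintype.card β).choose k * ((k ^ Fintype.card α) ^ #M *
        (Fintype.card β ^ Fintype.card α) ^ (Fintype.card ι - #M)) := by
  calc #{f : ι → α → β | #(M.biUnion fun i => univ.image (f i)) ≤ k}
      ≤ #((powersetCard k (univ : Finset β)).biUnion fun T =>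
          {f : ι → α → β | M.biUnion (fun i => univ.image (f i)) ⊆ T}) := by
        refine card_le_card fun f hf => ?_
        obtain ⟨T, hST, -, hT⟩ := exists_subsuperset_card_eq (subset_univ _)
          (mem_filter.1 hf).2 (by simpa using hk)
        simp only [mem_biUnion, mem_powersetCard, mem_filter, mem_univ, true_and]
        exact ⟨T, ⟨subset_univ T, hT⟩, hST⟩
    _ ≤ ∑ T ∈ powersetCard k (univ : Finset β),
          #{f : ι → α → β | M.biUnion (fun i => univ.image (f i)) ⊆ T} := card_biUnion_le
    _ = _ := by
        rw [sum_congr rfl fun T hT => by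
          rw [card_filter_biUnion_image_subset, (mem_powersetCard.1 hT).2],
          sum_const, card_powersetCard, card_univ, smul_eq_mul]

end Counting

theorem choose_mul_pow_pow_le {n k m ℓ : ℕ} {c δ : ℝ} (hn : 0 < n) (hc : 0 ≤ c) (hδ : 0 ≤ δ)
    (hk : (k : ℝ) ≤ c * δ * m * ℓ) (hm : (m : ℝ) * ℓ ≤ (n : ℝ) ^ ((1 - c) * δ)) :
    (n.choose k : ℝ) * ((k : ℝ) ^ ℓ) ^ m ≤
      ((c * δ) ^ ℓ * (n : ℝ) ^ ((δ - 1) * ℓ)) ^ m * ((n : ℝ) ^ ℓ) ^ m := by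
  have hn0 : (0 : ℝ) < n := by positivity
  have hn1 : (1 : ℝ) ≤ n := by exact_mod_cast hn
  have hchoose : (n.choose k : ℝ) ≤ (n : ℝ) ^ (c * δ * m * ℓ) :=
    calc (n.choose k : ℝ) ≤ (n : ℝ) ^ k := by exact_mod_cast n.choose_le_pow k
      _ = (n : ℝ) ^ (k : ℝ) := (rpow_natCast (n : ℝ) k).symm
      _ ≤ _ := rpow_le_rpow_of_exponent_le hn1 hk
  have hkx : (k : ℝ) ≤ c * δ * (n : ℝ) ^ ((1 - c) * δ) :=
    hk.trans (by rw [mul_assoc (c * δ)]; gcongr)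
  have hpow : ((k : ℝ) ^ ℓ) ^ m ≤ ((c * δ) ^ ℓ * (n : ℝ) ^ ((1 - c) * δ * ℓ)) ^ m := by
    rw [rpow_mul_natCast hn0.le, ← mul_pow]
    gcongr
  calc (n.choose k : ℝ) * ((k : ℝ) ^ ℓ) ^ m
      ≤ (n : ℝ) ^ (c * δ * m * ℓ) * ((c * δ) ^ ℓ * (n : ℝ) ^ ((1 - c) * δ * ℓ)) ^ m := by gcongr
    _ = ((c * δ) ^ ℓ * (n : ℝ) ^ ((δ - 1) * ℓ)) ^ m * ((n : ℝ) ^ ℓ) ^ m := by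
      rw [← rpow_natCast (n : ℝ) ℓ]
      simp only [mul_pow, ← rpow_mul_natCast hn0.le]
      have hexp : (n : ℝ) ^ (c * δ * m * ℓ) * (n : ℝ) ^ ((1 - c) * δ * ℓ * m) =
          (n : ℝ) ^ ((δ - 1) * ℓ * m) * (n : ℝ) ^ ((ℓ : ℝ) * m) := by
        rw [← rpow_add hn0, ← rpow_add hn0]
        ring_nf
      linear_combination (c ^ ℓ) ^ m * (δ ^ ℓ) ^ m * hexp

theorem card_filter_card_biUnion_image_le_floor {n N ℓ : ℕ} {c δ : ℝ} (hn : 0 < n)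
    (hc0 : 0 ≤ c) (hc1 : c ≤ 1) (hδ0 : 0 ≤ δ) (hδ1 : δ ≤ 1) (M : Finset (Fin N))
    (hM : (#M : ℝ) * ℓ ≤ (n : ℝ) ^ ((1 - c) * δ)) :
    (#{f : Fin N → Fin ℓ → Fin n | #(M.biUnion fun i => univ.image (f i)) ≤ ⌊c * δ * #M * ℓ⌋₊}
        : ℝ) ≤ ((c * δ) ^ ℓ * (n : ℝ) ^ ((δ - 1) * ℓ)) ^ #M * ((n : ℝ) ^ ℓ) ^ N := by
  set k := ⌊c * δ * #M * ℓ⌋₊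
  have hk : (k : ℝ) ≤ c * δ * #M * ℓ := Nat.floor_le (by positivity)
  have hkn : k ≤ n := by
    have hpow : (n : ℝ) ^ ((1 - c) * δ) ≤ n := by
      simpa using rpow_le_rpow_of_exponent_le (by exact_mod_cast hn : (1 : ℝ) ≤ n)
        (by nlinarith : (1 - c) * δ ≤ 1)
    have : (k : ℝ) ≤ n := by nlinarith [mul_nonneg hc0 hδ0, mul_le_one₀ hc1 hδ0 hδ1]
    exact_mod_cast this
  have hMN : #M ≤ N := by simpa using card_le_univ M
  have hcount := card_filter_card_biUnion_image_le (α := Fin ℓ) (β := Fin n) M (by simpa using hkn)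
  simp only [Fintype.card_fin] at hcount
  calc (#{f : Fin N → Fin ℓ → Fin n | #(M.biUnion fun i => univ.image (f i)) ≤ k} : ℝ)
      ≤ (n.choose k : ℝ) * ((k : ℝ) ^ ℓ) ^ #M * ((n : ℝ) ^ ℓ) ^ (N - #M) := by
        rw [mul_assoc]; exact_mod_cast hcount
    _ ≤ ((c * δ) ^ ℓ * (n : ℝ) ^ ((δ - 1) * ℓ)) ^ #M * ((n : ℝ) ^ ℓ) ^ #M *
          ((n : ℝ) ^ ℓ) ^ (N - #M) := by
        gcongr ?_ * _
        exact choose_mul_pow_pow_le hn hc0 hδ0 hk hM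
    _ = _ := by rw [mul_assoc, ← pow_add, Nat.add_sub_cancel' hMN]

theorem sum_pow_card_le_two_mul {ι : Type*} [Fintype ι] {𝓜 : Finset (Finset ι)}
    (h𝓜 : ∀ M ∈ 𝓜, M.Nonempty) {r : ℝ} (hr : 0 ≤ r) (hr1 : Fintype.card ι * r ≤ 1) :
    ∑ M ∈ 𝓜, r ^ #M ≤ 2 * (Fintype.card ι * r) := by
  classical
  have hsum : ∑ M : Finset ι, r ^ #M = (r + 1) ^ Fintype.card ι := by
    simpa using Fintype.sum_pow_mul_eq_add_pow ι r 1
  have hx0 : 0 ≤ Fintype.card ι * r := by positivity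
  have hexp := abs_exp_sub_one_le (x := Fintype.card ι * r) (by rwa [abs_of_nonneg hx0])
  rw [abs_of_nonneg hx0] at hexp
  calc ∑ M ∈ 𝓜, r ^ #M ≤ ∑ M ∈ univ.erase ∅, r ^ #M :=
        sum_le_sum_of_subset_of_nonneg (fun M hM => mem_erase.2 ⟨(h𝓜 M hM).ne_empty, mem_univ M⟩)
          fun _ _ _ => by positivity
    _ = (r + 1) ^ Fintype.card ι - 1 := by
        rw [← hsum, ← add_sum_erase _ _ (mem_univ ∅)]; simp
    _ ≤ exp r ^ Fintype.card ι - 1 := by gcongr; exact add_one_le_exp r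
    _ = exp (Fintype.card ι * r) - 1 := by rw [← exp_nat_mul]
    _ ≤ 2 * (Fintype.card ι * r) := (le_abs_self _).trans hexp

theorem natCast_mul_pow_mul_rpow_le {δ : ℝ} (hδ0 : 0 ≤ δ) (hδ1 : δ ≤ 1) {n N ℓ : ℕ}
    (hn : 0 < n) (hℓ : 20 ≤ ℓ) (hN : (N : ℝ) ≤ 1000 * ℓ * (n : ℝ) ^ ((1 - δ) * ℓ)) :
    N * ((0.01 * δ) ^ ℓ * (n : ℝ) ^ ((δ - 1) * ℓ)) ≤ 0.025 := by
  have hcancel : (n : ℝ) ^ ((1 - δ) * ℓ) * (n : ℝ) ^ ((δ - 1) * ℓ) = 1 := by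
    rw [← rpow_add (by positivity)]
    ring_nf
    exact rpow_zero _
  have hℓ2 : (ℓ : ℝ) ≤ 2 ^ ℓ := by exact_mod_cast ℓ.lt_two_pow_self.le
  calc N * ((0.01 * δ) ^ ℓ * (n : ℝ) ^ ((δ - 1) * ℓ))
      ≤ 1000 * ℓ * (n : ℝ) ^ ((1 - δ) * ℓ) * ((0.01 * δ) ^ ℓ * (n : ℝ) ^ ((δ - 1) * ℓ)) := by
        gcongr
    _ = 1000 * ℓ * (0.01 * δ) ^ ℓ := by linear_combination 1000 * ℓ * (0.01 * δ) ^ ℓ * hcancel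
    _ ≤ 1000 * 2 ^ ℓ * 0.01 ^ ℓ := by gcongr; linarith
    _ = 1000 * 0.02 ^ ℓ := by rw [mul_assoc, ← mul_pow]; norm_num
    _ ≤ 1000 * 0.02 ^ 20 := by
        gcongr 1000 * ?_
        exact pow_le_pow_of_le_one (by norm_num) (by norm_num) hℓ
    _ ≤ 0.025 := by norm_num

theorem stmt_3_general (δ : ℝ) (hδ : δ ∈ Set.Ioo (0 : ℝ) 1) (n N ℓ : ℕ)
    (hn : 0 < n) (hℓ : 20 ≤ ℓ)
    (hNub : (N : ℝ) ≤ 1000 * ℓ * (n : ℝ) ^ ((1 - δ) * ℓ)) :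
    ((Nat.card {f : Fin N → Fin ℓ → Fin n //
        ∀ M : Finset (Fin N), M.Nonempty → (M.card : ℝ) ≤ (n : ℝ) ^ (0.99 * δ) / ℓ →
          0.01 * δ * M.card * ℓ
            ≤ ((M.biUnion (fun i => Finset.image (f i) Finset.univ)).card : ℝ)} : ℝ)
      / (Nat.card (Fin N → Fin ℓ → Fin n) : ℝ)) ≥ 0.95 := by
  classical
  obtain ⟨hδ0, hδ1⟩ := hδ
  have : Nonempty (Fin n) := ⟨⟨0, hn⟩⟩
  set r : ℝ := (0.01 * δ) ^ ℓ * (n : ℝ) ^ ((δ - 1) * ℓ)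
  have hNr : N * r ≤ 0.025 := natCast_mul_pow_mul_rpow_le hδ0.le hδ1.le hn hℓ hNub
  set 𝓜 : Finset (Finset (Fin N)) := {M | M.Nonempty ∧ (#M : ℝ) ≤ (n : ℝ) ^ (0.99 * δ) / ℓ}
  refine le_trans (by norm_num) (one_sub_le_card_subtype_div_card _ (ε := 0.05) ?_)
  calc _ ≤ (∑ M ∈ 𝓜, #{f : Fin N → Fin ℓ → Fin n |
          #(M.biUnion fun i => univ.image (f i)) ≤ ⌊0.01 * δ * #M * ℓ⌋₊} : ℝ) := by
        refine mod_cast card_filter_le_sum_card_filter 𝓜 fun f hf => ?_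
        push Not at hf
        obtain ⟨M, hMne, hMsmall, hMunion⟩ := hf
        exact ⟨M, mem_filter.2 ⟨mem_univ M, hMne, hMsmall⟩, Nat.le_floor hMunion.le⟩
    _ ≤ (∑ M ∈ 𝓜, r ^ #M) * ((n : ℝ) ^ ℓ) ^ N := by
        rw [sum_mul]
        refine sum_le_sum fun M hM => card_filter_card_biUnion_image_le_floor hn (by norm_num)
          (by norm_num) hδ0.le hδ1.le M ?_
        have hMsmall := (mem_filter.1 hM).2.2
        rwa [le_div_iff₀ (by positivity), show (0.99 : ℝ) = 1 - 0.01 by norm_num] at hMsmall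
    _ ≤ 0.05 * Fintype.card (Fin N → Fin ℓ → Fin n) := by
        have hsum := sum_pow_card_le_two_mul (𝓜 := 𝓜) (fun M hM => (mem_filter.1 hM).2.1)
          (by positivity : 0 ≤ r) (by rw [Fintype.card_fin]; linarith)
        rw [Fintype.card_fin] at hsum
        simp only [Fintype.card_fun, Fintype.card_fin, Nat.cast_pow]
        gcongr
        linarith

/-- **Disperser property of random subsets.**
Sampling `N` independent uniformly random functions `f i : Fin ℓ → Fin n` (with `S i` the image
of `f i`), with probability at least `0.95` the following holds: for every nonempty
`M ⊆ Fin N` with `|M| ≤ n^(0.99δ)/ℓ`, we have `|⋃_{i ∈ M} S i| ≥ 0.01·δ·|M|·ℓ`. -/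
theorem stmt_3 (δ : ℝ) (hδ : δ ∈ Set.Ioo (0 : ℝ) 1) (n N ℓ : ℕ)
    (hn : 0 < n) (hN : 0 < N) (hℓ : 20 ≤ ℓ)
    (hNub : (N : ℝ) ≤ 1000 * ℓ * (n : ℝ) ^ ((1 - δ) * ℓ)) :
    ((Nat.card {f : Fin N → Fin ℓ → Fin n //
        ∀ M : Finset (Fin N), M.Nonempty → (M.card : ℝ) ≤ (n : ℝ) ^ (0.99 * δ) / ℓ →
          0.01 * δ * M.card * ℓ
            ≤ ((M.biUnion (fun i => Finset.image (f i) Finset.univ)).card : ℝ)} : ℝ)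
      / (Nat.card (Fin N → Fin ℓ → Fin n) : ℝ)) ≥ 0.95 :=
  stmt_3_general δ hδ n N ℓ hn hℓ hNub
end

section
/- Let δ ∈ (0,1) be a real number and let n, m, ℓ be positive integers. Sample m independent uniformly random functions f_1,…,f_m : Fin ℓ → Fin n and let S_i be the image of f_i. Then the probability that |S_1 ∪ ⋯ ∪ S_m| < 0.01·δ·m·ℓ is at most (0.01·δ·m·ℓ / n^{1−0.01δ})^{mℓ}. -/
/-!
All values of a family with fewer than `t` distinct values lie in a set of size `s = ⌊t⌋₊` (or
`n`, if smaller). There are `n.choose s ≤ n ^ t` such sets and at most `s ^ (mℓ) ≤ t ^ (mℓ)`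
families with values in a given one. Dividing by the `n ^ (mℓ)` families and using
`t = 0.01·δ·(mℓ)` turns `n ^ t · t ^ (mℓ) / n ^ (mℓ)` into `(t / n ^ (1 - 0.01·δ)) ^ (mℓ)`.
-/

open Finset

section FewValues

variable {ι β : Type*} [Fintype ι] [DecidableEq ι] [Fintype β] [DecidableEq β]

theorem card_filter_card_image_le (s : ℕ) (hs : s ≤ Fintype.card β) :
    #{f : ι → β | #(univ.image f) ≤ s} ≤ (Fintype.card β).choose s * s ^ Fintype.card ι := by
  have hcover : ({f : ι → β | #(univ.image f) ≤ s} : Finset _) ⊆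
      (powersetCard s (univ : Finset β)).biUnion fun S => Fintype.piFinset fun _ => S := by
    intro f hf
    obtain ⟨S, himage, -, hS⟩ := exists_subsuperset_card_eq (subset_univ (univ.image f))
      (mem_filter.1 hf).2 (by rwa [card_univ])
    simp only [mem_biUnion, mem_powersetCard, Fintype.mem_piFinset]
    exact ⟨S, ⟨subset_univ S, hS⟩, fun i => himage (mem_image_of_mem f (mem_univ i))⟩
  calc _ ≤ _ := card_le_card hcover
    _ ≤ ∑ S ∈ powersetCard s (univ : Finset β), #(Fintype.piFinset fun _ : ι => S) :=
        card_biUnion_le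
    _ = (Fintype.card β).choose s * s ^ Fintype.card ι := by
        rw [sum_congr rfl fun S hS => by
            rw [Fintype.card_piFinset, prod_const, (mem_powersetCard.1 hS).2, card_univ],
          sum_const, card_powersetCard, card_univ, smul_eq_mul]

theorem card_card_image_lt_le [Nonempty β] {t : ℝ} (ht : 0 ≤ t) :
    (Nat.card {f : ι → β // (#(univ.image f) : ℝ) < t} : ℝ)
      ≤ (Fintype.card β : ℝ) ^ t * t ^ Fintype.card ι := by
  set n := Fintype.card β
  set s := min ⌊t⌋₊ n
  have hst : (s : ℝ) ≤ t := (Nat.cast_le.2 (min_le_left _ _)).trans (Nat.floor_le ht)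
  have hcount : Nat.card {f : ι → β // (#(univ.image f) : ℝ) < t}
      ≤ #{f : ι → β | #(univ.image f) ≤ s} := by
    rw [Nat.card_eq_fintype_card, Fintype.card_subtype]
    refine card_le_card (monotone_filter_right _ fun f _ hf => ?_)
    exact le_min (Nat.le_floor hf.le) ((card_le_univ _).trans_eq rfl)
  have hn : (1 : ℝ) ≤ n := Nat.one_le_cast.2 Fintype.card_pos
  calc (Nat.card {f : ι → β // (#(univ.image f) : ℝ) < t} : ℝ)
      ≤ (n.choose s : ℝ) * (s : ℝ) ^ Fintype.card ι := by
        exact_mod_cast hcount.trans (card_filter_card_image_le s (min_le_right _ _))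
    _ ≤ (n : ℝ) ^ t * t ^ Fintype.card ι := by
        gcongr
        calc (n.choose s : ℝ) ≤ (n : ℝ) ^ s := by exact_mod_cast Nat.choose_le_pow n s
          _ = (n : ℝ) ^ (s : ℝ) := (Real.rpow_natCast _ _).symm
          _ ≤ (n : ℝ) ^ t := Real.rpow_le_rpow_of_exponent_le hn hst

end FewValues

theorem div_rpow_one_sub_pow {x : ℝ} (hx : 0 < x) (t c : ℝ) (N : ℕ) :
    (t / x ^ (1 - c)) ^ N = x ^ (c * N) * t ^ N / x ^ N := by
  rw [div_pow, ← Real.rpow_natCast (x ^ (1 - c)), ← Real.rpow_mul hx.le, sub_mul, one_mul,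
    Real.rpow_sub hx, Real.rpow_natCast]
  field_simp

theorem biUnion_image_eq_image_uncurry {α β γ : Type*} [Fintype α] [Fintype β] [DecidableEq γ]
    (f : α → β → γ) :
    (univ.biUnion fun a => univ.image (f a)) = univ.image (Function.uncurry f) := by
  ext; simp

theorem stmt_4_general (δ : ℝ) (hδ : δ ∈ Set.Ioo (0 : ℝ) 1) (n m ℓ : ℕ)
    (hn : 0 < n) :
    ((Nat.card {f : Fin m → Fin ℓ → Fin n //
        ((Finset.univ.biUnion (fun i => Finset.image (f i) Finset.univ)).card : ℝ)
          < 0.01 * δ * m * ℓ} : ℝ)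
      / (Nat.card (Fin m → Fin ℓ → Fin n) : ℝ))
      ≤ (0.01 * δ * m * ℓ / (n : ℝ) ^ ((1 : ℝ) - 0.01 * δ)) ^ (m * ℓ) := by
  set t : ℝ := 0.01 * δ * m * ℓ
  have ht : 0 ≤ t := by have := hδ.1; positivity
  have huncurry : Nat.card {f : Fin m → Fin ℓ → Fin n //
      ((univ.biUnion fun i => univ.image (f i)).card : ℝ) < t}
      = Nat.card {g : Fin m × Fin ℓ → Fin n // (#(univ.image g) : ℝ) < t} :=
    Nat.card_congr <| ((Equiv.curry _ _ _).subtypeEquiv fun g => by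
      rw [biUnion_image_eq_image_uncurry, Equiv.curry_apply, Function.uncurry_curry]).symm
  have hexponent : 0.01 * δ * ((m * ℓ : ℕ) : ℝ) = t := by push_cast; ring
  have : NeZero n := ⟨hn.ne'⟩
  have hcard_fun : Nat.card (Fin m → Fin ℓ → Fin n) = n ^ (m * ℓ) := by
    simp [pow_mul']
  rw [huncurry, hcard_fun, div_rpow_one_sub_pow (Nat.cast_pos.2 hn), hexponent]
  push_cast
  gcongr
  simpa using card_card_image_lt_le (ι := Fin m × Fin ℓ) (β := Fin n) ht

/-- Sampling `m` independent uniformly random functions `f i : Fin ℓ → Fin n` (with `S i` the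
image of `f i`), the probability that `|S 1 ∪ ⋯ ∪ S m| < 0.01·δ·m·ℓ` is at most
`(0.01·δ·m·ℓ / n^(1 − 0.01δ))^(mℓ)`. -/
theorem stmt_4 (δ : ℝ) (hδ : δ ∈ Set.Ioo (0 : ℝ) 1) (n m ℓ : ℕ)
    (hn : 0 < n) (hm : 0 < m) (hℓ : 0 < ℓ) :
    ((Nat.card {f : Fin m → Fin ℓ → Fin n //
        ((Finset.univ.biUnion (fun i => Finset.image (f i) Finset.univ)).card : ℝ)
          < 0.01 * δ * m * ℓ} : ℝ)
      / (Nat.card (Fin m → Fin ℓ → Fin n) : ℝ))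
      ≤ (0.01 * δ * m * ℓ / (n : ℝ) ^ ((1 : ℝ) - 0.01 * δ)) ^ (m * ℓ) :=
  stmt_4_general δ hδ n m ℓ hn
end

section
/- Let δ ∈ (0,1] be a real number, let ℓ, k', d be positive integers with 0.01·δ·d·ℓ ≥ 2, and let S_1,…,S_{k'} be finite subsets of a set V such that for every nonempty M ⊆ {1,…,k'} one has |∪_{j∈M} S_j| ≥ 0.01·δ·|M|·ℓ. Let F be a simple graph on vertex set {1,…,k'} with minimum degree at least d, and let E^(F) be the set of unordered pairs {u,v} of distinct elements of V such that u ∈ S_j and v ∈ S_{j'} for some edge {j,j'} of F. Then |E^(F)| ≥ 10^{−5} · δ² · k' · d · ℓ². -/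
/-!
Put `c = 0.01·δ·ℓ`. The sets `S_j` over the neighbourhood of any vertex cover at least
`c·d ≥ 2` elements. Offering each `S_j` to `⌈c⌉` copies of `j` (and padding with dummy
elements), Hall's theorem yields at least `⌊c·k'⌋ ≥ c·k'/2` distinct representatives
`x ∈ S_j`. Such an `x` forms a pair of `E^(F)` with every other element covered by the
neighbourhood of `j`, and each pair arises at most twice, so
`|E^(F)| ≥ (c·k'/2)·(c·d/2)/2 = c²·k'·d/8`.
-/

open Finset

theorem Sym2.card_le_two_mul_card_image_mk_uncurry {α : Type*} [DecidableEq α]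
    (D : Finset (α × α)) : #D ≤ 2 * #(D.image Sym2.mk.uncurry) := by
  refine card_le_mul_card_image D 2 fun z _ => ?_
  induction z using Sym2.ind with
  | h a b =>
    calc #{p ∈ D | Sym2.mk.uncurry p = s(a, b)} ≤ #{(a, b), (b, a)} := by
          refine card_le_card fun p hp => ?_
          obtain ⟨-, hp⟩ := mem_filter.1 hp
          rcases Sym2.eq_iff.1 hp with ⟨rfl, rfl⟩ | ⟨rfl, rfl⟩ <;> simp
      _ ≤ 2 := card_le_two

theorem Finset.exists_distinct_representatives_of_deficiency {ι α : Type*} [Fintype ι]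
    [DecidableEq α] (T : ι → Finset α) (m : ℕ)
    (h : ∀ A : Finset ι, #A + m ≤ #(A.biUnion T) + Fintype.card ι) :
    ∃ R : Finset (ι × α), m ≤ #R ∧ Set.InjOn Prod.snd (R : Set (ι × α)) ∧
      ∀ p ∈ R, p.2 ∈ T p.1 := by
  classical
  set n := Fintype.card ι
  have hmn : m ≤ n := by simpa using h ∅
  -- Offering `n - m` dummy elements to every index restores Hall's condition.
  let T' : ι → Finset (α ⊕ Fin (n - m)) := fun i => (T i).disjSum univ
  have hall : ∀ A : Finset ι, #A ≤ #(A.biUnion T') := by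
    intro A
    rcases A.eq_empty_or_nonempty with rfl | hA
    · simp
    have hT' : A.biUnion T' = (A.biUnion T).disjSum univ := by
      ext (a | b) <;> simp [T', hA.exists_mem]
    have := h A
    rw [hT', card_disjSum, card_univ, Fintype.card_fin]
    omega
  obtain ⟨g, hg, hgT⟩ := (all_card_le_biUnion_card_iff_exists_injective T').1 hall
  let R : Finset (ι × α) := (univ.image fun i => (i, g i)).preimage (Prod.map id Sum.inl)
    (Function.Injective.prodMap Function.injective_id Sum.inl_injective).injOn
  have hR : ∀ p, p ∈ R ↔ g p.1 = Sum.inl p.2 := by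
    rintro ⟨i, a⟩
    simp [R, eq_comm]
  refine ⟨R, ?_, ?_, fun p hp => inl_mem_disjSum.1 ((hR p).1 hp ▸ hgT p.1)⟩
  · have hcover : univ ⊆ R.image Prod.fst ∪ univ.filter fun i => (g i).isRight := by
      intro i _
      rcases hgi : g i with a | b
      · exact mem_union_left _ (mem_image.2 ⟨(i, a), (hR _).2 hgi, rfl⟩)
      · exact mem_union_right _ (by simp [hgi])
    have hdummy : #(univ.filter fun i => (g i).isRight) ≤ n - m := by
      refine (card_le_card_of_injOn g (t := (∅ : Finset α).disjSum univ) ?_ hg.injOn).trans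
        (by simp)
      intro i hi
      obtain ⟨b, hb⟩ := Sum.isRight_iff.1 (mem_filter.1 hi).2
      simp [hb]
    have hsplit := (card_le_card hcover).trans (card_union_le _ _)
    rw [card_univ] at hsplit
    have := card_image_le (s := R) (f := Prod.fst)
    omega
  · intro p hp q hq hpq
    exact Prod.ext (hg (((hR p).1 hp).trans (hpq ▸ ((hR q).1 hq).symm))) hpq

theorem Finset.exists_distinct_representatives_of_le_card_biUnion {ι V : Type*} [Fintype ι]
    [DecidableEq V] (S : ι → Finset V) {c : ℝ} (hc : 0 ≤ c)
    (hS : ∀ M : Finset ι, M.Nonempty → c * #M ≤ #(M.biUnion S)) :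
    ∃ R : Finset (ι × V), ⌊c * Fintype.card ι⌋₊ ≤ #R ∧
      Set.InjOn Prod.snd (R : Set (ι × V)) ∧ ∀ p ∈ R, p.2 ∈ S p.1 := by
  classical
  set t := ⌈c⌉₊
  set n := Fintype.card ι
  obtain ⟨R, hRcard, hRinj, hRS⟩ := exists_distinct_representatives_of_deficiency
    (fun p : ι × Fin t => S p.1) ⌊c * n⌋₊ fun A => by
      set M := A.image Prod.fst
      have hAM : #A ≤ #M * t := by
        calc #A ≤ #(M ×ˢ A.image Prod.snd) := card_le_card subset_product
          _ ≤ #M * t := by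
            rw [card_product]; gcongr; exact card_le_univ _ |>.trans_eq (by simp)
      have hMS : c * #M ≤ #(M.biUnion S) := by
        rcases A.eq_empty_or_nonempty with rfl | hA
        · simp [M]
        · exact hS M (hA.image _)
      have hMn : (#M : ℝ) ≤ n := by exact_mod_cast card_le_univ M
      have hct : c ≤ t := Nat.le_ceil c
      have hfloor : (⌊c * n⌋₊ : ℝ) ≤ c * n := Nat.floor_le (by positivity)
      have hAM' : (#A : ℝ) ≤ #M * t := by exact_mod_cast hAM
      rw [show A.biUnion (fun p => S p.1) = M.biUnion S from image_biUnion.symm,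
        Fintype.card_prod, Fintype.card_fin]
      have : (#A : ℝ) + ⌊c * n⌋₊ ≤ #(M.biUnion S) + n * t := by
        nlinarith [mul_le_mul_of_nonneg_left hMn (sub_nonneg.2 hct)]
      exact_mod_cast this
  refine ⟨R.image fun p => (p.1.1, p.2), ?_, ?_, ?_⟩
  · rwa [card_image_of_injOn (f := fun p : (ι × Fin t) × V => (p.1.1, p.2))
      fun p hp q hq h => hRinj hp hq (Prod.ext_iff.1 h).2]
  · rintro _ hp' _ hq' h
    obtain ⟨p, hp, rfl⟩ := mem_image.1 hp'
    obtain ⟨q, hq, rfl⟩ := mem_image.1 hq'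
    rw [hRinj hp hq h]
  · simp only [mem_image]
    rintro _ ⟨p, hp, rfl⟩
    exact hRS p hp

theorem sum_card_erase_le_two_mul_ncard {ι V : Type*} [DecidableEq V] {R : Finset (ι × V)}
    (hR : Set.InjOn Prod.snd (R : Set (ι × V))) (N : ι → Finset V) {E : Set (Sym2 V)}
    (hE : E.Finite)
    (hRE : ∀ p ∈ R, ∀ v ∈ N p.1, v ≠ p.2 → s(p.2, v) ∈ E) :
    ∑ p ∈ R, #((N p.1).erase p.2) ≤ 2 * E.ncard := by
  let D : Finset (V × V) := R.biUnion fun p => {p.2} ×ˢ (N p.1).erase p.2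
  have hD : #D = ∑ p ∈ R, #((N p.1).erase p.2) := by
    refine (card_biUnion fun p hp q hq hpq => disjoint_left.2 fun x hxp hxq => hpq ?_).trans
      (sum_congr rfl fun p _ => by rw [card_product, card_singleton, one_mul])
    simp only [mem_product, mem_singleton] at hxp hxq
    exact hR hp hq (hxp.1.symm.trans hxq.1)
  calc ∑ p ∈ R, #((N p.1).erase p.2) = #D := hD.symm
    _ ≤ 2 * #(D.image Sym2.mk.uncurry) := Sym2.card_le_two_mul_card_image_mk_uncurry D
    _ ≤ 2 * E.ncard := by
      rw [← Set.ncard_coe_finset]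
      gcongr
      intro e he
      simp only [coe_image, Set.mem_image, mem_coe, D, mem_biUnion, mem_product,
        mem_singleton, mem_erase] at he
      obtain ⟨⟨u, v⟩, ⟨p, hp, rfl, hvu, hv⟩, rfl⟩ := he
      exact hRE p hp v hv hvu

namespace SimpleGraph

variable {ι V : Type*} (F : SimpleGraph ι) (S : ι → Finset V)

/-- The set `E^(F)`. -/
def spannedPairs : Set (Sym2 V) :=
  {e | ∃ u v : V, e = s(u, v) ∧ u ≠ v ∧
    ∃ j j' : ι, F.Adj j j' ∧ u ∈ S j ∧ v ∈ S j'}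

theorem spannedPairs_finite [Finite ι] [DecidableEq V] : (F.spannedPairs S).Finite := by
  have := Fintype.ofFinite ι
  refine (univ.biUnion S).sym2.finite_toSet.subset ?_
  rintro _ ⟨u, v, rfl, -, j, j', -, hu, hv⟩
  exact mem_coe.2 (mk_mem_sym2_iff.2
    ⟨mem_biUnion.2 ⟨j, mem_univ _, hu⟩, mem_biUnion.2 ⟨j', mem_univ _, hv⟩⟩)

theorem card_mul_sub_one_le_two_mul_ncard_spannedPairs [Fintype ι] [DecidableRel F.Adj]
    [DecidableEq V] {R : Finset (ι × V)} (hRinj : Set.InjOn Prod.snd (R : Set (ι × V)))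
    (hRS : ∀ p ∈ R, p.2 ∈ S p.1) {a : ℝ}
    (ha : ∀ j, a ≤ #((F.neighborFinset j).biUnion S)) :
    #R * (a - 1) ≤ 2 * (F.spannedPairs S).ncard := by
  let N j := (F.neighborFinset j).biUnion S
  have hcount := sum_card_erase_le_two_mul_ncard hRinj N (F.spannedPairs_finite S)
    fun p hp v hv hvp => by
      obtain ⟨j', hj', hvj'⟩ := mem_biUnion.1 hv
      exact ⟨p.2, v, rfl, hvp.symm, p.1, j', (F.mem_neighborFinset _ _).1 hj', hRS p hp, hvj'⟩
  calc (#R : ℝ) * (a - 1) = #R • (a - 1) := (nsmul_eq_mul _ _).symm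
    _ ≤ ∑ p ∈ R, (#((N p.1).erase p.2) : ℝ) := card_nsmul_le_sum _ _ _ fun p _ => by
        have : #(N p.1) ≤ #((N p.1).erase p.2) + 1 :=
          Nat.sub_le_iff_le_add.1 pred_card_le_card_erase
        have : (#(N p.1) : ℝ) ≤ #((N p.1).erase p.2) + 1 := by exact_mod_cast this
        linarith [ha p.1]
    _ ≤ 2 * (F.spannedPairs S).ncard := by exact_mod_cast hcount

end SimpleGraph

theorem stmt_5_general {V : Type} [DecidableEq V] (δ : ℝ)
    (ℓ k' d : ℕ) (hk' : 0 < k') (hd : 0 < d)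
    (hdl : (2 : ℝ) ≤ 0.01 * δ * d * ℓ)
    (S : Fin k' → Finset V)
    (hS : ∀ M : Finset (Fin k'), M.Nonempty →
      0.01 * δ * M.card * ℓ ≤ ((M.biUnion S).card : ℝ))
    (F : SimpleGraph (Fin k'))
    (hF : ∀ v : Fin k', d ≤ Nat.card (F.neighborSet v)) :
    (10 : ℝ) ^ (-5 : ℤ) * δ ^ 2 * k' * d * ℓ ^ 2 ≤
      (Nat.card {e : Sym2 V | ∃ u v : V, e = s(u, v) ∧ u ≠ v ∧
        ∃ j j' : Fin k', F.Adj j j' ∧ u ∈ S j ∧ v ∈ S j'} : ℝ) := by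
  classical
  set c : ℝ := 0.01 * δ * ℓ
  have hcd : 2 ≤ c * d := by linarith [show c * d = 0.01 * δ * d * ℓ by ring]
  have hc : 0 < c := pos_of_mul_pos_left (by linarith) (Nat.cast_nonneg d)
  have hdeg : ∀ j, d ≤ #(F.neighborFinset j) := fun j => by
    simpa only [Nat.card_eq_fintype_card, F.card_neighborSet_eq_degree,
      ← F.card_neighborFinset_eq_degree] using hF j
  have hdk : (d : ℝ) ≤ k' := by
    exact_mod_cast (hdeg ⟨0, hk'⟩).trans ((F.degree_lt_card_verts _).le.trans_eq (by simp))
  have hN : ∀ j, c * d ≤ #((F.neighborFinset j).biUnion S) := fun j =>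
    calc c * d ≤ c * #(F.neighborFinset j) := by gcongr; exact_mod_cast hdeg j
      _ = 0.01 * δ * #(F.neighborFinset j) * ℓ := by ring
      _ ≤ _ := hS _ (card_pos.1 (hd.trans_le (hdeg j)))
  obtain ⟨R, hRcard, hRinj, hRS⟩ := exists_distinct_representatives_of_le_card_biUnion S hc.le
    fun M hM => (hS M hM).trans_eq' (by ring)
  rw [Fintype.card_fin] at hRcard
  have hR : c * k' - 1 ≤ #R := (Nat.sub_one_lt_floor _).le.trans (by exact_mod_cast hRcard)
  have hck : 2 ≤ c * k' := hcd.trans (by gcongr)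
  have hpairs := F.card_mul_sub_one_le_two_mul_ncard_spannedPairs S hRinj hRS hN
  change _ ≤ (Nat.card (F.spannedPairs S) : ℝ)
  rw [Nat.card_coe_set_eq]
  calc (10 : ℝ) ^ (-5 : ℤ) * δ ^ 2 * k' * d * ℓ ^ 2 = c ^ 2 * k' * d / 10 := by
        simp only [c]; norm_num; ring
    _ ≤ (c * k' / 2) * (c * d / 2) / 2 := by
        have : 0 ≤ c ^ 2 * k' * d := by positivity
        linarith
    _ ≤ #R * (c * d - 1) / 2 := by gcongr <;> linarith
    _ ≤ (F.spannedPairs S).ncard := by linarith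

/-- If the union of the `S j` over any nonempty index set `M` has size at least
`0.01·δ·|M|·ℓ`, and `F` is a graph on `Fin k'` with minimum degree at least `d`
(with `0.01·δ·d·ℓ ≥ 2`), then the set `E^(F)` of unordered pairs `{u,v}` of distinct
elements with `u ∈ S j`, `v ∈ S j'` for some edge `{j, j'}` of `F` has size at least
`10⁻⁵·δ²·k'·d·ℓ²`. -/
theorem stmt_5 {V : Type} [DecidableEq V] (δ : ℝ) (hδ : δ ∈ Set.Ioc (0 : ℝ) 1)
    (ℓ k' d : ℕ) (hℓ : 0 < ℓ) (hk' : 0 < k') (hd : 0 < d)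
    (hdl : (2 : ℝ) ≤ 0.01 * δ * d * ℓ)
    (S : Fin k' → Finset V)
    (hS : ∀ M : Finset (Fin k'), M.Nonempty →
      0.01 * δ * M.card * ℓ ≤ ((M.biUnion S).card : ℝ))
    (F : SimpleGraph (Fin k'))
    (hF : ∀ v : Fin k', d ≤ Nat.card (F.neighborSet v)) :
    (10 : ℝ) ^ (-5 : ℤ) * δ ^ 2 * k' * d * ℓ ^ 2 ≤
      (Nat.card {e : Sym2 V | ∃ u v : V, e = s(u, v) ∧ u ≠ v ∧
        ∃ j j' : Fin k', F.Adj j j' ∧ u ∈ S j ∧ v ∈ S j'} : ℝ) :=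
  stmt_5_general δ ℓ k' d hk' hd hdl S hS F hF
end

section
/- Let n, k' be positive integers, let S_1,…,S_{k'} be fixed finite subsets of Fin n, and let F be a fixed simple graph on vertex set {1,…,k'}. Sample G from G(n,1/2), and let G'' be the graph on {1,…,k'} in which distinct i, j are adjacent iff S_i ∪ S_j is a clique in G. Then the probability that G'' = F is at most 2^{−|E^(F)|}, where E^(F) is the set of unordered pairs {u,v} of distinct vertices of Fin n such that u ∈ S_j and v ∈ S_{j'} for some edge {j,j'} of F. -/
/-- Auxiliary counting lemma: if every graph satisfying `P` contains all edges of a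
non-diagonal set `E`, then the number of graphs satisfying `P` times `2 ^ |E|` is at most
the total number of graphs. -/
lemma stmt_6_aux {V : Type*} [Fintype V] [DecidableEq V] (E : Set (Sym2 V))
    (hEdiag : ∀ e ∈ E, ¬ e.IsDiag) (P : SimpleGraph V → Prop)
    (hP : ∀ G : SimpleGraph V, P G → E ⊆ G.edgeSet) :
    Nat.card {G : SimpleGraph V // P G} * 2 ^ Nat.card E ≤ Nat.card (SimpleGraph V) := by
  classical
  set Efin : Finset (Sym2 V) := (Set.toFinite E).toFinset with hEfindef
  have hmemEfin : ∀ e, e ∈ Efin ↔ e ∈ E := fun e => Set.Finite.mem_toFinset _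
  -- the injection
  let f : {G : SimpleGraph V // P G} × Finset {e // e ∈ Efin} → SimpleGraph V :=
    fun p => SimpleGraph.fromEdgeSet
      ((p.1.1.edgeSet \ E) ∪ (Subtype.val '' (↑p.2 : Set {e // e ∈ Efin})))
  have hsub : ∀ (A : Finset {e // e ∈ Efin}),
      (Subtype.val '' (↑A : Set {e // e ∈ Efin})) ⊆ E := by
    rintro A e ⟨⟨e', he'⟩, -, rfl⟩
    exact (hmemEfin e').mp he'
  have hUdiag : ∀ (G : SimpleGraph V) (A : Finset {e // e ∈ Efin}),
      ∀ e ∈ (G.edgeSet \ E) ∪ (Subtype.val '' (↑A : Set {e // e ∈ Efin})), ¬ e.IsDiag := by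
    rintro G A e (⟨he, -⟩ | he)
    · exact G.not_isDiag_of_mem_edgeSet he
    · exact hEdiag e (hsub A he)
  have hedge : ∀ (G : SimpleGraph V) (A : Finset {e // e ∈ Efin}),
      (SimpleGraph.fromEdgeSet
        ((G.edgeSet \ E) ∪ (Subtype.val '' (↑A : Set {e // e ∈ Efin})))).edgeSet
      = (G.edgeSet \ E) ∪ (Subtype.val '' (↑A : Set {e // e ∈ Efin})) := by
    intro G A
    rw [SimpleGraph.edgeSet_fromEdgeSet]
    ext e
    simp only [Set.mem_diff, Set.mem_setOf_eq, and_iff_left_iff_imp]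
    exact fun he => hUdiag G A e he
  have hfinj : Function.Injective f := by
    rintro ⟨⟨G1, h1⟩, A1⟩ ⟨⟨G2, h2⟩, A2⟩ hf
    have hU : (G1.edgeSet \ E) ∪ (Subtype.val '' (↑A1 : Set {e // e ∈ Efin}))
        = (G2.edgeSet \ E) ∪ (Subtype.val '' (↑A2 : Set {e // e ∈ Efin})) := by
      have := congrArg SimpleGraph.edgeSet hf
      simpa only [f, hedge] using this
    have hA : (Subtype.val '' (↑A1 : Set {e // e ∈ Efin}))
        = (Subtype.val '' (↑A2 : Set {e // e ∈ Efin})) := by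
      have h1' := congrArg (· ∩ E) hU
      simp only [Set.union_inter_distrib_right, Set.diff_inter_self,
        Set.empty_union] at h1'
      rwa [Set.inter_eq_left.mpr (hsub A1), Set.inter_eq_left.mpr (hsub A2)] at h1'
    have hG : G1 = G2 := by
      have h2' := congrArg (· ∪ E) hU
      simp only [Set.union_assoc] at h2'
      rw [Set.union_eq_right.mpr (hsub A1), Set.union_eq_right.mpr (hsub A2),
        Set.diff_union_of_subset (hP G1 h1), Set.diff_union_of_subset (hP G2 h2)] at h2'
      exact SimpleGraph.edgeSet_injective h2'
    have hA' : A1 = A2 :=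
      Finset.coe_injective (Set.image_injective.mpr Subtype.val_injective hA)
    subst hG; subst hA'; rfl
  have hle := Nat.card_le_card_of_injective f hfinj
  have hcard : Nat.card E = Efin.card := by
    rw [Nat.card_coe_set_eq, Set.ncard_eq_toFinset_card E (Set.toFinite E)]
  rw [Nat.card_prod, Nat.card_eq_fintype_card (α := Finset {e // e ∈ Efin}),
    Fintype.card_finset, Fintype.card_coe] at hle
  rwa [hcard]

/-- For fixed subsets `S j ⊆ Fin n` and a fixed graph `F` on `Fin k'`, sampling `G` uniformly
from all simple graphs on `Fin n` (i.e. `G(n,1/2)`), the probability that the graph `G''` on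
`Fin k'` (where distinct `i, j` are adjacent iff `S i ∪ S j` is a clique in `G`) equals `F`
is at most `2^(−|E^(F)|)`. -/
theorem stmt_6 (n k' : ℕ) (hn : 0 < n) (hk' : 0 < k')
    (S : Fin k' → Finset (Fin n)) (F : SimpleGraph (Fin k')) :
    ((Nat.card {G : SimpleGraph (Fin n) //
        SimpleGraph.fromRel (fun i j =>
          G.IsClique ((S i ∪ S j : Finset (Fin n)) : Set (Fin n))) = F} : ℝ)
      / (Nat.card (SimpleGraph (Fin n)) : ℝ))
      ≤ (2 : ℝ) ^ (-(Nat.card {e : Sym2 (Fin n) | ∃ u v : Fin n, e = s(u, v) ∧ u ≠ v ∧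
          ∃ j j' : Fin k', F.Adj j j' ∧ u ∈ S j ∧ v ∈ S j'} : ℤ)) := by
  classical
  set E : Set (Sym2 (Fin n)) := {e : Sym2 (Fin n) | ∃ u v : Fin n, e = s(u, v) ∧ u ≠ v ∧
      ∃ j j' : Fin k', F.Adj j j' ∧ u ∈ S j ∧ v ∈ S j'} with hE
  have hEdiag : ∀ e ∈ E, ¬ e.IsDiag := by
    rintro e ⟨u, v, rfl, huv, -⟩
    simpa using huv
  have key : ∀ G : SimpleGraph (Fin n),
      SimpleGraph.fromRel (fun i j =>
        G.IsClique ((S i ∪ S j : Finset (Fin n)) : Set (Fin n))) = F →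
      E ⊆ G.edgeSet := by
    rintro G hG e ⟨u, v, rfl, huv, j, j', hjj', hu, hv⟩
    rw [← hG, SimpleGraph.fromRel_adj] at hjj'
    have hc : G.IsClique ((S j ∪ S j' : Finset (Fin n)) : Set (Fin n)) := by
      rcases hjj'.2 with h | h
      · exact h
      · simpa [Finset.union_comm] using h
    exact hc (by simp [hu]) (by simp [hv]) huv
  have hmain := stmt_6_aux E hEdiag _ key
  have hTotpos : 0 < Nat.card (SimpleGraph (Fin n)) := Nat.card_pos
  set a := Nat.card {G : SimpleGraph (Fin n) //
      SimpleGraph.fromRel (fun i j =>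
        G.IsClique ((S i ∪ S j : Finset (Fin n)) : Set (Fin n))) = F}
  set m := Nat.card E
  set T := Nat.card (SimpleGraph (Fin n))
  have hTpos : (0 : ℝ) < T := by exact_mod_cast hTotpos
  have hpow : (0 : ℝ) < 2 ^ m := by positivity
  rw [zpow_neg, zpow_natCast, div_le_iff₀ hTpos, inv_mul_eq_div, le_div_iff₀ hpow]
  exact_mod_cast hmain
end

section
/- Let κ, t, ℓ be positive integers with ℓ < t and 16t ≤ κ, and let H be a K_{t,t}-free simple graph on κ vertices. Then the number of ordered pairs (S,T) of disjoint ℓ-element vertex subsets of H such that every vertex of S is adjacent to every vertex of T is at most (2·e^{−ℓ²/(16t)}) · C(κ,ℓ) · C(κ−ℓ,ℓ). -/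
open Finset

section Aux

private lemma exp_neg_two_le7 {x : ℝ} (h0 : 0 ≤ x) (h1 : x ≤ 1/2) :
    Real.exp (-(2*x)) ≤ 1 - x := by
  have h2 : 2*x + 1 ≤ Real.exp (2*x) := Real.add_one_le_exp _
  have h3 : Real.exp (-(2*x)) * Real.exp (2*x) = 1 := by rw [← Real.exp_add]; simp
  nlinarith [Real.exp_pos (2*x), Real.exp_pos (-(2*x))]

private lemma cast_desc7 (n k : ℕ) (hk : k ≤ n) :
    (n.descFactorial k : ℝ) = ∏ i ∈ range k, ((n:ℝ) - i) := by
  rw [Nat.descFactorial_eq_prod_range, Nat.cast_prod]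
  exact Finset.prod_congr rfl fun i hi => by
    rw [Nat.cast_sub (le_trans (Nat.le_of_lt_succ (Nat.lt_succ_of_lt (mem_range.1 hi))) hk)]

private lemma auxI7 (κ t ℓ m θ : ℕ) (hℓ : 0 < ℓ) (hlt : ℓ < t) (htκ : 16*t ≤ κ)
    (hθdef : θ = κ - ℓ - m) (hmlo : (ℓ:ℝ)*κ ≤ 16*t*m) (hmκ : ℓ + m ≤ κ)
    (hθ12 : 12*t ≤ θ) :
    (θ.choose ℓ : ℝ) ≤ Real.exp (-(ℓ:ℝ)^2/(16*t)) * ((κ-ℓ).choose ℓ) := by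
  have ht0 : (0:ℝ) < t := by exact_mod_cast hℓ.trans hlt
  have hℓθ : ℓ ≤ θ := by omega
  have hℓκ2 : 2*ℓ ≤ κ := by omega
  have hdesc : (θ.descFactorial ℓ : ℝ)
      ≤ Real.exp (-(ℓ:ℝ)^2/(16*t)) * ((κ-ℓ).descFactorial ℓ) := by
    rw [cast_desc7 θ ℓ hℓθ, cast_desc7 (κ-ℓ) ℓ (by omega)]
    have hE : Real.exp (-(ℓ:ℝ)^2/(16*t)) = (Real.exp (-((ℓ:ℝ)/(16*t))))^ℓ := by
      rw [← Real.exp_nat_mul]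
      congr 1
      field_simp
    have hcast : ((κ - ℓ : ℕ):ℝ) = (κ:ℝ) - ℓ := Nat.cast_sub (by omega)
    have hdistr : ∏ i ∈ range ℓ, (Real.exp (-((ℓ:ℝ)/(16*t))) * ((κ:ℝ) - ℓ - i))
        = (Real.exp (-((ℓ:ℝ)/(16*t))))^ℓ * ∏ i ∈ range ℓ, ((κ:ℝ) - ℓ - i) := by
      rw [Finset.prod_mul_distrib, Finset.prod_const, card_range]
    rw [hE, hcast, ← hdistr]
    have hθreal : (θ:ℝ) = (κ:ℝ) - ℓ - m := by
      rw [hθdef, Nat.cast_sub (by omega : m ≤ κ - ℓ), Nat.cast_sub (by omega : ℓ ≤ κ)]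
    apply Finset.prod_le_prod
    · intro i hi
      have hi' : (i:ℝ) < ℓ := by exact_mod_cast mem_range.1 hi
      have : (ℓ:ℝ) ≤ θ := by exact_mod_cast hℓθ
      linarith
    · intro i hi
      have hi' : (i:ℝ) < ℓ := by exact_mod_cast mem_range.1 hi
      have hℓκ2' : 2*(ℓ:ℝ) ≤ κ := by exact_mod_cast hℓκ2
      set A := (κ:ℝ) - ℓ - i with hA
      have hA0 : (0:ℝ) ≤ A := by simp only [hA]; linarith
      have hAκ : A ≤ κ := by
        have h01 : (0:ℝ) ≤ (ℓ:ℝ) := by positivity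
        have h02 : (0:ℝ) ≤ (i:ℝ) := by positivity
        simp only [hA]; linarith
      have hc1 : 1 - (ℓ:ℝ)/(16*t) ≤ Real.exp (-((ℓ:ℝ)/(16*t))) := by
        have := Real.add_one_le_exp (-((ℓ:ℝ)/(16*t))); linarith
      have h3 : (ℓ:ℝ)/(16*t)*κ ≤ m := by
        rw [div_mul_eq_mul_div, div_le_iff₀ (by positivity)]
        linarith
      have h2 : (ℓ:ℝ)/(16*t)*A ≤ (ℓ:ℝ)/(16*t)*κ :=
        mul_le_mul_of_nonneg_left hAκ (by positivity)
      have h1 : A - (ℓ:ℝ)/(16*t)*A ≤ Real.exp (-((ℓ:ℝ)/(16*t))) * A := by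
        have := mul_le_mul_of_nonneg_right hc1 hA0
        nlinarith [this]
      rw [hθreal]
      have heq : (κ:ℝ) - ↑ℓ - ↑m - ↑i = A - m := by simp only [hA]; ring
      rw [heq]
      linarith
  have hfact : (0:ℝ) < (Nat.factorial ℓ : ℝ) := by
    exact_mod_cast Nat.factorial_pos ℓ
  have e1 : (θ.descFactorial ℓ : ℝ) = (Nat.factorial ℓ : ℝ) * (θ.choose ℓ) := by
    exact_mod_cast congrArg Nat.cast (Nat.descFactorial_eq_factorial_mul_choose θ ℓ)
  have e2 : ((κ-ℓ).descFactorial ℓ : ℝ) = (Nat.factorial ℓ : ℝ) * ((κ-ℓ).choose ℓ) := by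
    exact_mod_cast congrArg Nat.cast (Nat.descFactorial_eq_factorial_mul_choose (κ-ℓ) ℓ)
  rw [e1, e2] at hdesc
  have h' : (Nat.factorial ℓ : ℝ) * (θ.choose ℓ)
      ≤ (Nat.factorial ℓ : ℝ) * (Real.exp (-(ℓ:ℝ)^2/(16*t)) * ((κ-ℓ).choose ℓ)) := by
    nlinarith [hdesc]
  exact le_of_mul_le_mul_left h' hfact

set_option maxHeartbeats 1600000 in
private lemma auxII7 (κ t ℓ m θ : ℕ) (hℓ : 0 < ℓ) (hlt : ℓ < t) (htκ : 16*t ≤ κ)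
    (hθdef : θ = κ - ℓ - m) (hmhi : (8:ℝ)*t*m ≤ ℓ*κ)
    (hmκ : ℓ + m ≤ κ) (hθ12 : 12*t ≤ θ) :
    (κ.choose t : ℝ) * ((t-1).choose ℓ)
      ≤ Real.exp (-(ℓ:ℝ)^2/(16*t)) * (κ.choose ℓ) * (θ.choose t) := by
  have ht0 : (0:ℝ) < t := by exact_mod_cast hℓ.trans hlt
  have hℓt : (ℓ:ℝ) ≤ t := by exact_mod_cast hlt.le
  have hℓ0 : (0:ℝ) < ℓ := by exact_mod_cast hℓ
  have hℓt1 : (ℓ:ℝ) + 1 ≤ t := by exact_mod_cast hlt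
  have htκ' : (16:ℝ)*t ≤ κ := by exact_mod_cast htκ
  have hθ12' : (12:ℝ)*t ≤ θ := by exact_mod_cast hθ12
  have hθreal : (θ:ℝ) = (κ:ℝ) - ℓ - m := by
    rw [hθdef, Nat.cast_sub (by omega : m ≤ κ - ℓ), Nat.cast_sub (by omega : ℓ ≤ κ)]
  set x : ℝ := (ℓ:ℝ)/(7*t) with hx
  have hx0 : 0 ≤ x := by positivity
  have hx12 : x ≤ 1/2 := by
    rw [hx, div_le_iff₀ (by positivity)]
    linarith
  set E := Real.exp (-(ℓ:ℝ)^2/(16*t)) with hEdef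
  set C1 := (Real.exp (2*x))^(t-ℓ) with hC1
  set C2 := ((1:ℝ)/11)^ℓ with hC2
  have hdesc : (κ.descFactorial t : ℝ) * ((t-1).descFactorial ℓ)
      ≤ E * (κ.descFactorial ℓ) * (θ.descFactorial t) := by
    rw [cast_desc7 κ t (by omega), cast_desc7 (t-1) ℓ (by omega),
        cast_desc7 κ ℓ (by omega), cast_desc7 θ t (by omega)]
    have hc : ((t-1:ℕ):ℝ) = (t:ℝ) - 1 := by
      rw [Nat.cast_sub (by omega)]; norm_num
    rw [hc]
    have hsplit1 : ∏ i ∈ range t, ((κ:ℝ) - i)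
        = (∏ i ∈ range ℓ, ((κ:ℝ) - i)) * ∏ i ∈ range (t-ℓ), ((κ:ℝ) - ℓ - i) := by
      conv_lhs => rw [show t = ℓ + (t-ℓ) by omega, Finset.prod_range_add]
      congr 1
      exact Finset.prod_congr rfl fun i _ => by push_cast; ring
    have hsplit2 : ∏ i ∈ range t, ((θ:ℝ) - i)
        = (∏ i ∈ range (t-ℓ), ((θ:ℝ) - i)) * ∏ i ∈ range ℓ, ((θ:ℝ) - ((t:ℝ) - ℓ) - i) := by
      conv_lhs => rw [show t = (t-ℓ) + ℓ by omega, Finset.prod_range_add]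
      congr 1
      exact Finset.prod_congr rfl fun i _ => by
        push_cast [Nat.cast_sub hlt.le]; ring
    rw [hsplit1, hsplit2]
    set Pκ := ∏ i ∈ range ℓ, ((κ:ℝ) - i) with hPκ
    set P1x := ∏ i ∈ range (t-ℓ), ((κ:ℝ) - ℓ - i) with hP1x
    set P2x := ∏ i ∈ range ℓ, ((t:ℝ) - 1 - i) with hP2x
    set P1y := ∏ i ∈ range (t-ℓ), ((θ:ℝ) - i) with hP1y
    set P2y := ∏ i ∈ range ℓ, ((θ:ℝ) - ((t:ℝ) - ℓ) - i) with hP2y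
    have hPκ0 : 0 ≤ Pκ := by
      apply Finset.prod_nonneg
      intro i hi
      have : (i:ℝ) + 1 ≤ ℓ := by exact_mod_cast mem_range.1 hi
      linarith
    have hP2x0 : 0 ≤ P2x := by
      apply Finset.prod_nonneg
      intro i hi
      have : (i:ℝ) + 1 ≤ ℓ := by exact_mod_cast mem_range.1 hi
      linarith
    have hP1y0 : 0 ≤ P1y := by
      apply Finset.prod_nonneg
      intro i hi
      have h1 : (i:ℝ) < (t-ℓ:ℕ) := by exact_mod_cast mem_range.1 hi
      have h2 : ((t-ℓ:ℕ):ℝ) ≤ t := by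
        rw [Nat.cast_sub hlt.le]; linarith
      linarith
    have hP2y0 : 0 ≤ P2y := by
      apply Finset.prod_nonneg
      intro i hi
      have : (i:ℝ) + 1 ≤ ℓ := by exact_mod_cast mem_range.1 hi
      linarith
    have key1 : P1x ≤ C1 * P1y := by
      have hdistr : ∏ i ∈ range (t-ℓ), (Real.exp (2*x) * ((θ:ℝ) - i)) = C1 * P1y := by
        rw [Finset.prod_mul_distrib, Finset.prod_const, card_range]
      rw [← hdistr]
      apply Finset.prod_le_prod
      · intro i hi
        have h1 : (i:ℝ) < (t-ℓ:ℕ) := by exact_mod_cast mem_range.1 hi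
        have h2 : ((t-ℓ:ℕ):ℝ) ≤ t := by rw [Nat.cast_sub hlt.le]; linarith
        linarith
      · intro i hi
        have h1 : (i:ℝ) + ℓ ≤ t := by
          have h1' : i + ℓ < t := by
            have := mem_range.1 hi; omega
          exact_mod_cast h1'.le
        set A := (κ:ℝ) - ℓ - i with hA
        have hA15 : (15/16:ℝ)*κ ≤ A := by
          simp only [hA]; linarith
        have hA0 : 0 ≤ A := by nlinarith
        have hm_le : (m:ℝ) ≤ x*A := by
          rw [hx, div_mul_eq_mul_div, le_div_iff₀ (by positivity)]
          nlinarith [mul_le_mul_of_nonneg_left hA15 hℓ0.le]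
        have hexp : Real.exp (-(2*x)) ≤ 1 - x := exp_neg_two_le7 hx0 hx12
        have h5 : Real.exp (-(2*x)) * A ≤ (θ:ℝ) - i := by
          have h6 := mul_le_mul_of_nonneg_right hexp hA0
          have h7 : (θ:ℝ) - i = A - m := by rw [hθreal, hA]; ring
          rw [h7]
          nlinarith [h6]
        have h8 := mul_le_mul_of_nonneg_left h5 (Real.exp_pos (2*x)).le
        have h9 : Real.exp (2*x) * (Real.exp (-(2*x)) * A) = A := by
          rw [← mul_assoc, ← Real.exp_add]; simp
        rw [h9] at h8
        exact h8
    have key2 : P2x ≤ C2 * P2y := by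
      have hdistr : ∏ i ∈ range ℓ, (((1:ℝ)/11) * ((θ:ℝ) - ((t:ℝ) - ℓ) - i)) = C2 * P2y := by
        rw [Finset.prod_mul_distrib, Finset.prod_const, card_range]
      rw [← hdistr]
      apply Finset.prod_le_prod
      · intro i hi
        have : (i:ℝ) + 1 ≤ ℓ := by exact_mod_cast mem_range.1 hi
        linarith
      · intro i hi
        have hiℓ : (i:ℝ) + 1 ≤ ℓ := by exact_mod_cast mem_range.1 hi
        have h11 : (11:ℝ)*((t:ℝ) - 1 - i) ≤ (θ:ℝ) - ((t:ℝ) - ℓ) - i := by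
          have hi0 : (0:ℝ) ≤ i := by positivity
          linarith
        linarith
    have scalar : C1 * C2 ≤ E := by
      have hc1 : C1 = Real.exp (((t-ℓ:ℕ):ℝ) * (2*x)) := by
        rw [hC1, Real.exp_nat_mul]
      have htℓ : ((t-ℓ:ℕ):ℝ) = (t:ℝ) - ℓ := Nat.cast_sub hlt.le
      have hsum : ((t-ℓ:ℕ):ℝ) * (2*x) + (ℓ:ℝ)^2/(16*t) ≤ (ℓ:ℝ) := by
        rw [htℓ]
        have e1 : ((t:ℝ)-ℓ)*(2*x) ≤ 2*(ℓ:ℝ)/7 := by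
          have hle : ((t:ℝ)-ℓ) ≤ t := by linarith
          calc ((t:ℝ)-ℓ)*(2*x) ≤ (t:ℝ)*(2*x) :=
                mul_le_mul_of_nonneg_right hle (by positivity)
          _ = 2*(ℓ:ℝ)/7 := by rw [hx]; field_simp
        have e2 : (ℓ:ℝ)^2/(16*t) ≤ (ℓ:ℝ)/16 := by
          rw [div_le_div_iff₀ (by positivity) (by norm_num)]
          nlinarith
        linarith
      have h11 : Real.exp ((ℓ:ℝ)) ≤ (11:ℝ)^ℓ := by
        have he : Real.exp ((ℓ:ℝ)) = Real.exp 1 ^ ℓ := by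
          rw [← Real.exp_nat_mul]; norm_num
        rw [he]
        exact pow_le_pow_left₀ (Real.exp_pos 1).le (by linarith [Real.exp_one_lt_d9]) ℓ
      have hkey : Real.exp (((t-ℓ:ℕ):ℝ) * (2*x)) * Real.exp ((ℓ:ℝ)^2/(16*t)) ≤ (11:ℝ)^ℓ := by
        rw [← Real.exp_add]
        exact le_trans (Real.exp_le_exp.2 hsum) h11
      have hstep : Real.exp (((t-ℓ:ℕ):ℝ) * (2*x)) ≤ (11:ℝ)^ℓ * E := by
        have h6 := mul_le_mul_of_nonneg_right hkey (Real.exp_pos (-(ℓ:ℝ)^2/(16*t))).le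
        have h7 : Real.exp (((t-ℓ:ℕ):ℝ) * (2*x)) * Real.exp ((ℓ:ℝ)^2/(16*t))
            * Real.exp (-(ℓ:ℝ)^2/(16*t)) = Real.exp (((t-ℓ:ℕ):ℝ) * (2*x)) := by
          rw [mul_assoc, ← Real.exp_add,
            show (ℓ:ℝ)^2/(16*(t:ℝ)) + -(ℓ:ℝ)^2/(16*(t:ℝ)) = 0 by ring, Real.exp_zero, mul_one]
        rw [h7] at h6
        exact h6
      have h110 : (0:ℝ) ≤ C2 := by positivity
      calc C1 * C2 ≤ ((11:ℝ)^ℓ * E) * C2 := by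
            rw [hc1]; exact mul_le_mul_of_nonneg_right hstep h110
      _ = E * ((11:ℝ)^ℓ * ((1:ℝ)/11)^ℓ) := by rw [hC2]; ring
      _ = E := by rw [← mul_pow]; norm_num
    have hsub : P1x * P2x ≤ E * (P1y * P2y) := by
      have hC1P : 0 ≤ C1 * P1y := mul_nonneg (by positivity) hP1y0
      calc P1x * P2x ≤ (C1 * P1y) * (C2 * P2y) := by
            apply mul_le_mul key1 key2 hP2x0 hC1P
      _ = (C1 * C2) * (P1y * P2y) := by ring
      _ ≤ E * (P1y * P2y) := mul_le_mul_of_nonneg_right scalar (mul_nonneg hP1y0 hP2y0)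
    calc Pκ * P1x * P2x = Pκ * (P1x * P2x) := by ring
    _ ≤ Pκ * (E * (P1y * P2y)) := mul_le_mul_of_nonneg_left hsub hPκ0
    _ = E * Pκ * (P1y * P2y) := by ring
  have ha : (κ.descFactorial t : ℝ) = (Nat.factorial t : ℝ) * κ.choose t := by
    exact_mod_cast congrArg Nat.cast (Nat.descFactorial_eq_factorial_mul_choose κ t)
  have hb : ((t-1).descFactorial ℓ : ℝ) = (Nat.factorial ℓ : ℝ) * (t-1).choose ℓ := by
    exact_mod_cast congrArg Nat.cast (Nat.descFactorial_eq_factorial_mul_choose (t-1) ℓ)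
  have hcc : (κ.descFactorial ℓ : ℝ) = (Nat.factorial ℓ : ℝ) * κ.choose ℓ := by
    exact_mod_cast congrArg Nat.cast (Nat.descFactorial_eq_factorial_mul_choose κ ℓ)
  have hd : (θ.descFactorial t : ℝ) = (Nat.factorial t : ℝ) * θ.choose t := by
    exact_mod_cast congrArg Nat.cast (Nat.descFactorial_eq_factorial_mul_choose θ t)
  rw [ha, hb, hcc, hd] at hdesc
  have hpos : (0:ℝ) < (Nat.factorial t : ℝ) * (Nat.factorial ℓ : ℝ) := by
    have h1 : (0:ℝ) < (Nat.factorial t : ℝ) := by exact_mod_cast Nat.factorial_pos t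
    have h2 : (0:ℝ) < (Nat.factorial ℓ : ℝ) := by exact_mod_cast Nat.factorial_pos ℓ
    positivity
  have h' : ((Nat.factorial t : ℝ) * (Nat.factorial ℓ : ℝ))
        * ((κ.choose t : ℝ) * ((t-1).choose ℓ))
      ≤ ((Nat.factorial t : ℝ) * (Nat.factorial ℓ : ℝ))
        * (Real.exp (-(ℓ:ℝ)^2/(16*t)) * (κ.choose ℓ) * (θ.choose t)) := by
    nlinarith [hdesc]
  exact le_of_mul_le_mul_left h' hpos

variable {V : Type} [Fintype V] [DecidableEq V] (H : SimpleGraph V) [DecidableRel H.Adj]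

/-- common neighborhood -/
private def cnb7 (S : Finset V) : Finset V := univ.filter (fun v => ∀ a ∈ S, H.Adj a v)

private lemma mem_cnb7 {S : Finset V} {v : V} : v ∈ cnb7 H S ↔ ∀ a ∈ S, H.Adj a v := by
  simp [cnb7]

private lemma cnb7_symm (S T : Finset V) : T ⊆ cnb7 H S ↔ S ⊆ cnb7 H T := by
  simp only [cnb7, Finset.subset_iff, mem_filter, mem_univ, true_and]
  constructor
  · intro h a ha b hb; exact (h hb a ha).symm
  · intro h b hb a ha; exact (h ha b hb).symm

private lemma cnb7_card_le (S : Finset V) : (cnb7 H S).card ≤ Fintype.card V - S.card := by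
  have hsub : cnb7 H S ⊆ univ \ S := by
    intro v hv
    simp only [mem_sdiff, mem_univ, true_and]
    intro hvS
    exact H.irrefl ((mem_filter.1 hv).2 v hvS)
  calc (cnb7 H S).card ≤ (univ \ S).card := card_le_card hsub
  _ = Fintype.card V - S.card := by rw [card_sdiff_of_subset (subset_univ S), card_univ]

private lemma key_count7 (X : Finset V) (k : ℕ) :
    ((univ.powersetCard k).filter (· ⊆ X)).card = X.card.choose k := by
  have h : (univ.powersetCard k).filter (· ⊆ X) = X.powersetCard k := by
    ext T
    simp only [mem_filter, mem_powersetCard, subset_univ, true_and]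
    tauto
  rw [h, Finset.card_powersetCard]

private lemma double_count7 (k1 k2 : ℕ) :
    ∑ S ∈ univ.powersetCard k1, ((cnb7 H S).card).choose k2
      = ∑ B ∈ (univ : Finset V).powersetCard k2,
          ((univ.powersetCard k1).filter (· ⊆ cnb7 H B)).card := by
  have h1 : ∀ S ∈ univ.powersetCard k1, ((cnb7 H S).card).choose k2
      = ∑ B ∈ (univ : Finset V).powersetCard k2, if B ⊆ cnb7 H S then 1 else 0 := by
    intro S _
    rw [← key_count7 (cnb7 H S) k2, Finset.card_filter]
  rw [Finset.sum_congr rfl h1, Finset.sum_comm]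
  refine Finset.sum_congr rfl fun B _ => ?_
  rw [Finset.card_filter]
  refine Finset.sum_congr rfl fun S _ => ?_
  simp only [cnb7_symm H S B]

private lemma N_formula7 (ℓ : ℕ) [DecidablePred (fun p : Finset V × Finset V =>
      p.1.card = ℓ ∧ p.2.card = ℓ ∧ Disjoint p.1 p.2 ∧ ∀ a ∈ p.1, ∀ b ∈ p.2, H.Adj a b)] :
    Nat.card {p : Finset V × Finset V // p.1.card = ℓ ∧ p.2.card = ℓ ∧
      Disjoint p.1 p.2 ∧ ∀ a ∈ p.1, ∀ b ∈ p.2, H.Adj a b}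
    = ∑ S ∈ univ.powersetCard ℓ, ((cnb7 H S).card).choose ℓ := by
  rw [Nat.card_eq_fintype_card, Fintype.card_subtype]
  have hfe : (univ : Finset (Finset V × Finset V)).filter (fun p => p.1.card = ℓ ∧ p.2.card = ℓ ∧
      Disjoint p.1 p.2 ∧ ∀ a ∈ p.1, ∀ b ∈ p.2, H.Adj a b)
      = ((univ.powersetCard ℓ) ×ˢ (univ.powersetCard ℓ)).filter (fun p => p.2 ⊆ cnb7 H p.1) := by
    ext ⟨S, T⟩
    simp only [mem_filter, mem_univ, true_and, mem_product, mem_powersetCard, subset_univ,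
      true_and]
    constructor
    · rintro ⟨h1, h2, _, hadj⟩
      refine ⟨⟨h1, h2⟩, ?_⟩
      intro v hv
      simp only [cnb7, mem_filter, mem_univ, true_and]
      exact fun a ha => hadj a ha v hv
    · rintro ⟨⟨h1, h2⟩, hsub⟩
      have hadj : ∀ a ∈ S, ∀ b ∈ T, H.Adj a b := fun a ha b hb =>
        (mem_filter.1 (hsub hb)).2 a ha
      refine ⟨h1, h2, ?_, hadj⟩
      rw [Finset.disjoint_left]
      intro v hvS hvT
      exact H.irrefl (hadj v hvS v hvT)
  rw [hfe, Finset.card_filter, Finset.sum_product]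
  refine Finset.sum_congr rfl fun S _ => ?_
  have h : (univ.powersetCard ℓ).filter (· ⊆ cnb7 H S) = (cnb7 H S).powersetCard ℓ := by
    ext T
    simp only [mem_filter, mem_powersetCard, subset_univ, true_and]
    tauto
  rw [← Finset.card_powersetCard, ← h, Finset.card_filter]

end Aux

/-- In a `K_{t,t}`-free graph `H` on `κ` vertices (with `ℓ < t` and `16t ≤ κ`), the number of
ordered pairs `(S, T)` of disjoint `ℓ`-element vertex subsets with every vertex of `S` adjacent
to every vertex of `T` is at most `(2·e^(−ℓ²/(16t)))·C(κ,ℓ)·C(κ−ℓ,ℓ)`. -/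
theorem stmt_7 {V : Type} [Fintype V] (κ t ℓ : ℕ) (hℓ : 0 < ℓ) (hlt : ℓ < t)
    (htκ : 16 * t ≤ κ) (H : SimpleGraph V) (hκ : Fintype.card V = κ)
    (hfree : ¬ ∃ A B : Finset V, Disjoint A B ∧ A.card = t ∧ B.card = t ∧
      ∀ a ∈ A, ∀ b ∈ B, H.Adj a b) :
    (Nat.card {p : Finset V × Finset V // p.1.card = ℓ ∧ p.2.card = ℓ ∧
        Disjoint p.1 p.2 ∧ ∀ a ∈ p.1, ∀ b ∈ p.2, H.Adj a b} : ℝ)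
      ≤ 2 * Real.exp (-(ℓ : ℝ) ^ 2 / (16 * t)) * (κ.choose ℓ) * ((κ - ℓ).choose ℓ) := by
  classical
  have ht : 0 < t := hℓ.trans hlt
  -- threshold parameters
  set m := ℓ * κ / (16 * t) + 1 with hm
  set θ := κ - ℓ - m with hθdef
  have hnatlow : ℓ * κ < 16 * t * m := by
    have hd := Nat.div_add_mod (ℓ*κ) (16*t)
    have hr : ℓ*κ % (16*t) < 16*t := Nat.mod_lt _ (by omega)
    have h3 : 16*t*m = 16*t*(ℓ*κ/(16*t)) + 16*t := by rw [hm]; ring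
    linarith
  have hnathigh : 8*t*m ≤ ℓ*κ := by
    have h1 : (ℓ*κ/(16*t)) * (16*t) ≤ ℓ*κ := Nat.div_mul_le_self _ _
    have h2 : 16*t ≤ ℓ*κ := le_trans htκ (Nat.le_mul_of_pos_left κ hℓ)
    have h3 : 16*t*m = (ℓ*κ/(16*t))*(16*t) + 16*t := by rw [hm]; ring
    linarith
  have hκpos : 0 < κ := by omega
  have hm8 : 8 * m < κ := by
    have hstep : t*(8*m) < t*κ := by
      have h5 : ℓ*κ < t*κ := Nat.mul_lt_mul_of_lt_of_le hlt (le_refl κ) hκpos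
      calc t*(8*m) = 8*t*m := by ring
      _ ≤ ℓ*κ := hnathigh
      _ < t*κ := h5
    exact Nat.lt_of_mul_lt_mul_left hstep
  have hmκ : ℓ + m ≤ κ := by omega
  have hθ12 : 12 * t ≤ θ := by omega
  have hmlo : (ℓ:ℝ)*κ ≤ 16*t*m := by exact_mod_cast hnatlow.le
  have hmhi : (8:ℝ)*t*m ≤ ℓ*κ := by exact_mod_cast hnathigh
  -- combinatorics
  have hNform := N_formula7 H ℓ
  have hfreeB : ∀ B : Finset V, B.card = t → (cnb7 H B).card ≤ t - 1 := by
    intro B hB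
    by_contra hcon
    push_neg at hcon
    have hge : t ≤ (cnb7 H B).card := by omega
    obtain ⟨A, hAsub, hAcard⟩ := Finset.exists_subset_card_eq hge
    apply hfree
    refine ⟨A, B, ?_, hAcard, hB, ?_⟩
    · rw [Finset.disjoint_left]
      intro a haA haB
      exact H.irrefl ((mem_cnb7 H).1 (hAsub haA) a haB)
    · intro a haA b hbB
      exact ((mem_cnb7 H).1 (hAsub haA) b hbB).symm
  have hdouble : ∑ S ∈ univ.powersetCard ℓ, ((cnb7 H S).card).choose t
      ≤ κ.choose t * ((t-1).choose ℓ) := by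
    rw [double_count7 H ℓ t]
    have hbound : ∀ B ∈ (univ : Finset V).powersetCard t,
        ((univ.powersetCard ℓ).filter (· ⊆ cnb7 H B)).card ≤ (t-1).choose ℓ := by
      intro B hB
      rw [key_count7]
      exact Nat.choose_le_choose ℓ (hfreeB B (mem_powersetCard.1 hB).2)
    calc ∑ B ∈ (univ : Finset V).powersetCard t,
          ((univ.powersetCard ℓ).filter (· ⊆ cnb7 H B)).card
        ≤ ((univ : Finset V).powersetCard t).card • ((t-1).choose ℓ) :=
          Finset.sum_le_card_nsmul _ _ _ hbound
    _ = κ.choose t * ((t-1).choose ℓ) := by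
        rw [smul_eq_mul, Finset.card_powersetCard, card_univ, hκ]
  set L := (univ.powersetCard ℓ).filter (fun S : Finset V => θ ≤ (cnb7 H S).card) with hLdef
  have hsplitN : ∑ S ∈ univ.powersetCard ℓ, ((cnb7 H S).card).choose ℓ
      = (∑ S ∈ L, ((cnb7 H S).card).choose ℓ)
        + ∑ S ∈ (univ.powersetCard ℓ).filter (fun S : Finset V => ¬ θ ≤ (cnb7 H S).card),
            ((cnb7 H S).card).choose ℓ :=
    (Finset.sum_filter_add_sum_filter_not _ _ _).symm
  have h_small : ∑ S ∈ (univ.powersetCard ℓ).filter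
        (fun S : Finset V => ¬ θ ≤ (cnb7 H S).card), ((cnb7 H S).card).choose ℓ
      ≤ κ.choose ℓ * θ.choose ℓ := by
    calc ∑ S ∈ (univ.powersetCard ℓ).filter (fun S : Finset V => ¬ θ ≤ (cnb7 H S).card),
          ((cnb7 H S).card).choose ℓ
        ≤ ((univ.powersetCard ℓ).filter
            (fun S : Finset V => ¬ θ ≤ (cnb7 H S).card)).card • (θ.choose ℓ) := by
          apply Finset.sum_le_card_nsmul
          intro S hS
          exact Nat.choose_le_choose ℓ (le_of_not_ge (mem_filter.1 hS).2)
    _ ≤ (univ.powersetCard ℓ : Finset (Finset V)).card * θ.choose ℓ := by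
          rw [smul_eq_mul]
          exact Nat.mul_le_mul_right _ (Finset.card_le_card (filter_subset _ _))
    _ = κ.choose ℓ * θ.choose ℓ := by rw [Finset.card_powersetCard, card_univ, hκ]
  have h_large : ∑ S ∈ L, ((cnb7 H S).card).choose ℓ ≤ L.card * ((κ - ℓ).choose ℓ) := by
    calc ∑ S ∈ L, ((cnb7 H S).card).choose ℓ ≤ L.card • ((κ - ℓ).choose ℓ) := by
          apply Finset.sum_le_card_nsmul
          intro S hS
          have hcard : S.card = ℓ := (mem_powersetCard.1 (mem_of_mem_filter S hS)).2
          have := cnb7_card_le H S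
          rw [hcard, hκ] at this
          exact Nat.choose_le_choose ℓ this
    _ = L.card * ((κ - ℓ).choose ℓ) := smul_eq_mul ..
  have h_Lcard : L.card * θ.choose t ≤ κ.choose t * ((t-1).choose ℓ) := by
    calc L.card * θ.choose t = ∑ _S ∈ L, θ.choose t := by rw [Finset.sum_const, smul_eq_mul]
    _ ≤ ∑ S ∈ L, ((cnb7 H S).card).choose t :=
        Finset.sum_le_sum fun S hS => Nat.choose_le_choose t (mem_filter.1 hS).2
    _ ≤ ∑ S ∈ univ.powersetCard ℓ, ((cnb7 H S).card).choose t :=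
        Finset.sum_le_sum_of_subset (filter_subset _ _)
    _ ≤ κ.choose t * ((t-1).choose ℓ) := hdouble
  -- real arithmetic
  set E := Real.exp (-(ℓ : ℝ) ^ 2 / (16 * t)) with hE
  have hI := auxI7 κ t ℓ m θ hℓ hlt htκ hθdef hmlo hmκ hθ12
  have hII := auxII7 κ t ℓ m θ hℓ hlt htκ hθdef hmhi hmκ hθ12
  have hθt_pos : (0:ℝ) < θ.choose t := by
    exact_mod_cast Nat.choose_pos (by omega : t ≤ θ)
  have hLreal : (L.card : ℝ) ≤ E * κ.choose ℓ := by
    have h1 : (L.card : ℝ) * θ.choose t ≤ (κ.choose t : ℝ) * ((t-1).choose ℓ) := by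
      exact_mod_cast h_Lcard
    have h2 : (L.card : ℝ) * θ.choose t ≤ (E * κ.choose ℓ) * θ.choose t := by
      calc (L.card : ℝ) * θ.choose t ≤ (κ.choose t : ℝ) * ((t-1).choose ℓ) := h1
      _ ≤ E * κ.choose ℓ * θ.choose t := hII
    exact le_of_mul_le_mul_right h2 hθt_pos
  rw [hNform, hsplitN]
  push_cast
  have hc1 : (0:ℝ) ≤ ((κ - ℓ).choose ℓ : ℝ) := by positivity
  have hc2 : (0:ℝ) ≤ (κ.choose ℓ : ℝ) := by positivity
  have hfin1 : (∑ S ∈ L, (((cnb7 H S).card).choose ℓ : ℝ))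
      ≤ E * κ.choose ℓ * ((κ - ℓ).choose ℓ) := by
    calc (∑ S ∈ L, (((cnb7 H S).card).choose ℓ : ℝ))
        ≤ (L.card : ℝ) * ((κ - ℓ).choose ℓ) := by exact_mod_cast h_large
    _ ≤ (E * κ.choose ℓ) * ((κ - ℓ).choose ℓ) := mul_le_mul_of_nonneg_right hLreal hc1
    _ = E * κ.choose ℓ * ((κ - ℓ).choose ℓ) := by ring
  have hfin2 : (∑ S ∈ (univ.powersetCard ℓ).filter
        (fun S : Finset V => ¬ θ ≤ (cnb7 H S).card), (((cnb7 H S).card).choose ℓ : ℝ))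
      ≤ E * κ.choose ℓ * ((κ - ℓ).choose ℓ) := by
    calc (∑ S ∈ (univ.powersetCard ℓ).filter
          (fun S : Finset V => ¬ θ ≤ (cnb7 H S).card), (((cnb7 H S).card).choose ℓ : ℝ))
        ≤ (κ.choose ℓ : ℝ) * (θ.choose ℓ) := by exact_mod_cast h_small
    _ ≤ (κ.choose ℓ : ℝ) * (E * ((κ - ℓ).choose ℓ)) := mul_le_mul_of_nonneg_left hI hc2
    _ = E * κ.choose ℓ * ((κ - ℓ).choose ℓ) := by ring
  push_cast at hfin1 hfin2
  linarith
end

section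
/- Let κ, t, ℓ be positive integers with ℓ < t, and let H be a K_{t,t}-free simple graph on κ vertices with vertex set V. Then the sum, over all ℓ-element subsets S of V, of C(|N(S)|, t) is at most C(κ, t) · C(t−1, ℓ). -/
/-- In a `K_{t,t}`-free graph `H` on `κ` vertices (with `ℓ < t`), the sum over all `ℓ`-element
vertex subsets `S` of `C(|N(S)|, t)` is at most `C(κ, t)·C(t−1, ℓ)`. -/
theorem stmt_9 {V : Type} [Fintype V] [DecidableEq V] (κ t ℓ : ℕ) (hℓ : 0 < ℓ) (hlt : ℓ < t)
    (H : SimpleGraph V) (hκ : Fintype.card V = κ)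
    (hfree : ¬ ∃ A B : Finset V, Disjoint A B ∧ A.card = t ∧ B.card = t ∧
      ∀ a ∈ A, ∀ b ∈ B, H.Adj a b) :
    ∑ S ∈ Finset.univ.powersetCard ℓ, (Nat.card {v : V | ∀ u ∈ S, H.Adj u v}).choose t
      ≤ κ.choose t * (t - 1).choose ℓ := by
  classical
  set A : Finset (Finset V) := Finset.univ.powersetCard ℓ with hA
  set B : Finset (Finset V) := (Finset.univ : Finset V).powersetCard t with hB
  have key : ∀ S : Finset V,
      (Nat.card {v : V | ∀ u ∈ S, H.Adj u v}).choose t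
        = (B.filter (fun T => ∀ v ∈ T, ∀ u ∈ S, H.Adj u v)).card := by
    intro S
    have h1 : Nat.card {v : V | ∀ u ∈ S, H.Adj u v}
        = (Finset.univ.filter (fun v => ∀ u ∈ S, H.Adj u v)).card := by
      rw [Nat.card_eq_fintype_card, Fintype.card_subtype]; rfl
    rw [h1, ← Finset.card_powersetCard]
    congr 1
    ext T
    simp only [Finset.mem_powersetCard, Finset.mem_filter, hB, Finset.subset_iff,
      Finset.mem_filter, Finset.mem_univ, true_and]
    tauto
  have bound : ∀ T ∈ B, (A.filter (fun S => ∀ v ∈ T, ∀ u ∈ S, H.Adj u v)).card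
      ≤ (t - 1).choose ℓ := by
    intro T hT
    have hTcard : T.card = t := (Finset.mem_powersetCard.mp hT).2
    set W : Finset V := Finset.univ.filter (fun u => ∀ v ∈ T, H.Adj v u) with hW
    have hWcard : W.card ≤ t - 1 := by
      by_contra hc
      have ht : t ≤ W.card := by omega
      obtain ⟨A', hA'sub, hA'card⟩ := Finset.exists_subset_card_eq ht
      apply hfree
      refine ⟨A', T, ?_, hA'card, hTcard, ?_⟩
      · rw [Finset.disjoint_left]
        intro x hxA hxT
        have := (Finset.mem_filter.mp (hA'sub hxA)).2 x hxT
        exact H.irrefl this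
      · intro a ha b hb
        exact ((Finset.mem_filter.mp (hA'sub ha)).2 b hb).symm
    have hsub : A.filter (fun S => ∀ v ∈ T, ∀ u ∈ S, H.Adj u v) ⊆ W.powersetCard ℓ := by
      intro S hS
      obtain ⟨hSA, hSp⟩ := Finset.mem_filter.mp hS
      rw [Finset.mem_powersetCard]
      refine ⟨?_, (Finset.mem_powersetCard.mp hSA).2⟩
      intro u hu
      rw [hW, Finset.mem_filter]
      exact ⟨Finset.mem_univ u, fun v hv => (hSp v hv u hu).symm⟩
    calc (A.filter (fun S => ∀ v ∈ T, ∀ u ∈ S, H.Adj u v)).card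
        ≤ (W.powersetCard ℓ).card := Finset.card_le_card hsub
      _ = W.card.choose ℓ := Finset.card_powersetCard ℓ W
      _ ≤ (t - 1).choose ℓ := Nat.choose_le_choose ℓ hWcard
  calc ∑ S ∈ A, (Nat.card {v : V | ∀ u ∈ S, H.Adj u v}).choose t
      = ∑ S ∈ A, ∑ T ∈ B, if ∀ v ∈ T, ∀ u ∈ S, H.Adj u v then 1 else 0 := by
        simp only [key, Finset.card_filter]
    _ = ∑ T ∈ B, ∑ S ∈ A, if ∀ v ∈ T, ∀ u ∈ S, H.Adj u v then 1 else 0 :=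
        Finset.sum_comm
    _ = ∑ T ∈ B, (A.filter (fun S => ∀ v ∈ T, ∀ u ∈ S, H.Adj u v)).card := by
        simp only [Finset.card_filter]
    _ ≤ ∑ _T ∈ B, (t - 1).choose ℓ := Finset.sum_le_sum bound
    _ = B.card * (t - 1).choose ℓ := by rw [Finset.sum_const, smul_eq_mul]
    _ = κ.choose t * (t - 1).choose ℓ := by
        rw [hB, Finset.card_powersetCard, Finset.card_univ, hκ]
end

section
/- Let κ, t, ℓ be positive integers with ℓ < t and 16t ≤ κ, and let H be a K_{t,t}-free simple graph on κ vertices with vertex set V. Set λ = (κ−ℓ)/t, γ = λ^{−ℓ/(2t)}, and x = γκ + (1−γ)t. Then the number of ℓ-element subsets S of V with |N(S)| ≥ x is at most C(κ,ℓ) · 2^{−ℓ/2}. -/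
/-!
Double count the pairs `(S, W)` with `#S = ℓ`, `#W = t` and `W ⊆ N(S)`. A set `S` with
`|N(S)| ≥ n` lies in at least `C(n, t)` pairs, while `K_{t,t}`-freeness forces `|N(W)| < t`, so a
`t`-set `W` lies in at most `C(t - 1, ℓ)` pairs. Comparing the falling factorials termwise gives
`C(κ, t) γ^t ≤ C(n, t)` for `n ≥ x` and `C(t - 1, ℓ) λ^ℓ ≤ C(κ, ℓ)`; since `γ^t λ^ℓ = λ^(ℓ/2)`
and `λ ≥ 2`, the number of such `S` is at most `C(κ, ℓ) λ^(-ℓ/2) ≤ C(κ, ℓ) 2^(-ℓ/2)`.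
-/

open Finset

lemma Nat.cast_descFactorial_eq_prod_range (a s : ℕ) :
    (a.descFactorial s : ℝ) = ∏ i ∈ range s, ((a : ℝ) - i) := by
  rcases le_or_gt s a with h | h
  · rw [Nat.descFactorial_eq_prod_range, Nat.cast_prod]
    exact prod_congr rfl fun i hi => Nat.cast_sub (by grind)
  · rw [Nat.descFactorial_eq_zero_iff_lt.2 h, Nat.cast_zero, eq_comm]
    exact prod_eq_zero (mem_range.2 h) (sub_self _)

lemma Nat.choose_mul_pow_le_choose {a b s : ℕ} {c : ℝ} (hc : 0 ≤ c) (hsa : s ≤ a)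
    (h : ∀ i < s, c * ((a : ℝ) - i) ≤ (b : ℝ) - i) :
    (a.choose s : ℝ) * c ^ s ≤ b.choose s := by
  have hdesc : (a.descFactorial s : ℝ) * c ^ s ≤ b.descFactorial s := by
    rw [Nat.cast_descFactorial_eq_prod_range, Nat.cast_descFactorial_eq_prod_range, mul_comm]
    nth_rw 1 [← card_range s]
    rw [← prod_const, ← prod_mul_distrib]
    refine prod_le_prod (fun i hi => mul_nonneg hc ?_) fun i hi => h i (mem_range.1 hi)
    have : (i : ℝ) ≤ a := by exact_mod_cast (mem_range.1 hi).le.trans hsa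
    linarith
  rw [Nat.descFactorial_eq_factorial_mul_choose, Nat.descFactorial_eq_factorial_mul_choose,
    Nat.cast_mul, Nat.cast_mul, mul_assoc] at hdesc
  exact le_of_mul_le_mul_left hdesc (by positivity)

lemma Nat.choose_mul_pow_le_choose_of_le {κ t n : ℕ} {γ : ℝ} (hγ0 : 0 ≤ γ) (hγ1 : γ ≤ 1)
    (htκ : t ≤ κ) (hn : γ * κ + (1 - γ) * t ≤ n) :
    (κ.choose t : ℝ) * γ ^ t ≤ n.choose t := by
  refine Nat.choose_mul_pow_le_choose hγ0 htκ fun i hi => ?_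
  have hit : (i : ℝ) ≤ t := by exact_mod_cast hi.le
  nlinarith [mul_le_mul_of_nonneg_left hit (sub_nonneg.2 hγ1)]

lemma Nat.choose_pred_mul_pow_le_choose {κ t ℓ : ℕ} (hℓt : ℓ < t) (hℓκ : ℓ ≤ κ) :
    ((t - 1).choose ℓ : ℝ) * (((κ : ℝ) - ℓ) / t) ^ ℓ ≤ κ.choose ℓ := by
  have ht : (0 : ℝ) < t := by exact_mod_cast (Nat.zero_le ℓ).trans_lt hℓt
  have hℓκ' : (ℓ : ℝ) ≤ κ := by exact_mod_cast hℓκ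
  have hlam : 0 ≤ ((κ : ℝ) - ℓ) / t := div_nonneg (sub_nonneg.2 hℓκ') ht.le
  refine Nat.choose_mul_pow_le_choose hlam (by omega) fun i hi => ?_
  have hi' : (i : ℝ) < ℓ := by exact_mod_cast hi
  calc ((κ : ℝ) - ℓ) / t * (((t - 1 : ℕ) : ℝ) - i) ≤ ((κ : ℝ) - ℓ) / t * t := by
        gcongr
        rw [Nat.cast_pred (by omega)]
        linarith [(Nat.cast_nonneg i : (0 : ℝ) ≤ i)]
    _ = κ - ℓ := div_mul_cancel₀ _ ht.ne'
    _ ≤ κ - i := by linarith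

lemma Real.rpow_neg_div_pow_mul_pow {lam : ℝ} (hlam : 0 < lam) {t : ℕ} (ht : t ≠ 0) (ℓ : ℕ) :
    (lam ^ (-(ℓ : ℝ) / (2 * t))) ^ t * lam ^ ℓ = lam ^ ((ℓ : ℝ) / 2) := by
  rw [← Real.rpow_natCast _ t, ← Real.rpow_mul hlam.le, ← Real.rpow_natCast lam ℓ,
    ← Real.rpow_add hlam]
  congr 1
  field_simp
  ring

namespace SimpleGraph

variable {V : Type*} [Fintype V] (G : SimpleGraph V)

def IsBicliqueFree (t : ℕ) : Prop :=
  ¬ ∃ A B : Finset V, Disjoint A B ∧ #A = t ∧ #B = t ∧ ∀ a ∈ A, ∀ b ∈ B, G.Adj a b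

variable [DecidableRel G.Adj]

def commonNbhd (S : Finset V) : Finset V := {v | ∀ u ∈ S, G.Adj u v}

variable {G}

@[simp]
lemma mem_commonNbhd {S : Finset V} {v : V} : v ∈ G.commonNbhd S ↔ ∀ u ∈ S, G.Adj u v := by
  simp [commonNbhd]

lemma subset_commonNbhd_comm {S T : Finset V} : T ⊆ G.commonNbhd S ↔ S ⊆ G.commonNbhd T := by
  simp only [subset_iff, mem_commonNbhd]
  exact ⟨fun h u hu w hw => (h hw u hu).symm, fun h w hw u hu => (h hu w hw).symm⟩

lemma disjoint_commonNbhd (S : Finset V) : Disjoint S (G.commonNbhd S) :=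
  Finset.disjoint_left.2 fun _ hv hv' => G.irrefl (mem_commonNbhd.1 hv' _ hv)

lemma natCard_setOf_forall_adj (S : Finset V) :
    Nat.card {v : V | ∀ u ∈ S, G.Adj u v} = #(G.commonNbhd S) := by
  rw [Nat.card_coe_set_eq, Set.ncard_eq_toFinset_card']
  congr 1
  ext v
  simp

lemma IsBicliqueFree.card_commonNbhd_lt {t : ℕ} (h : G.IsBicliqueFree t) {W : Finset V}
    (hW : #W = t) : #(G.commonNbhd W) < t := by
  by_contra! hle
  obtain ⟨B, hBW, hB⟩ := exists_subset_card_eq hle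
  exact h ⟨W, B, (disjoint_commonNbhd W).mono_right hBW, hW, hB,
    fun a ha b hb => mem_commonNbhd.1 (hBW hb) a ha⟩

lemma IsBicliqueFree.card_mul_choose_le {t : ℕ} (h : G.IsBicliqueFree t) (ℓ n : ℕ) :
    #{S : Finset V | #S = ℓ ∧ n ≤ #(G.commonNbhd S)} * n.choose t
      ≤ (Fintype.card V).choose t * (t - 1).choose ℓ := by
  classical
  rw [← card_univ, ← card_powersetCard]
  refine card_mul_le_card_mul (fun S W => W ⊆ G.commonNbhd S) (fun S hS => ?_) fun W hW => ?_
  · have hSW : (univ.powersetCard t).bipartiteAbove (fun S W => W ⊆ G.commonNbhd S) S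
        = (G.commonNbhd S).powersetCard t := by
      ext W
      simp [bipartiteAbove, mem_powersetCard, and_comm]
    rw [hSW, card_powersetCard]
    exact Nat.choose_le_choose t (mem_filter.1 hS).2.2
  · calc #(bipartiteBelow _ _ W)
        ≤ #((G.commonNbhd W).powersetCard ℓ) := by
          refine card_le_card fun S hS => ?_
          simp only [bipartiteBelow, mem_filter, mem_univ, true_and] at hS
          exact mem_powersetCard.2 ⟨subset_commonNbhd_comm.1 hS.2, hS.1.1⟩
      _ ≤ (t - 1).choose ℓ := by
          rw [card_powersetCard]
          exact Nat.choose_le_choose ℓ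
            (Nat.le_sub_one_of_lt (h.card_commonNbhd_lt (mem_powersetCard.1 hW).2))

lemma IsBicliqueFree.card_le_choose_mul_rpow {t ℓ : ℕ} (h : G.IsBicliqueFree t) (hℓt : ℓ < t)
    (hκ : ℓ + t ≤ Fintype.card V) {lam γ : ℝ} (hlam : lam = ((Fintype.card V : ℝ) - ℓ) / t)
    (hγ : γ = lam ^ (-(ℓ : ℝ) / (2 * t))) {n : ℕ}
    (hn : γ * Fintype.card V + (1 - γ) * t ≤ n) :
    (#{S : Finset V | #S = ℓ ∧ n ≤ #(G.commonNbhd S)} : ℝ)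
      ≤ (Fintype.card V).choose ℓ * lam ^ (-(ℓ : ℝ) / 2) := by
  set κ := Fintype.card V
  set F : Finset (Finset V) := {S : Finset V | #S = ℓ ∧ n ≤ #(G.commonNbhd S)}
  have ht : (0 : ℝ) < t := by exact_mod_cast (Nat.zero_le ℓ).trans_lt hℓt
  have htκ : (t : ℝ) ≤ κ := by exact_mod_cast le_of_add_le_right hκ
  have hlam1 : 1 ≤ lam := by
    rw [hlam, le_div_iff₀ ht]
    have : ((ℓ + t : ℕ) : ℝ) ≤ κ := by exact_mod_cast hκ
    push_cast at this
    linarith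
  have hlam0 : 0 < lam := one_pos.trans_le hlam1
  have hγ0 : 0 < γ := hγ ▸ Real.rpow_pos_of_pos hlam0 _
  have hγ1 : γ ≤ 1 := hγ ▸ Real.rpow_le_one_of_one_le_of_nonpos hlam1
    (div_nonpos_of_nonpos_of_nonneg (by simp) (by positivity))
  have htn : t ≤ n := by exact_mod_cast (show (t : ℝ) ≤ n by nlinarith)
  have hdc : (#F : ℝ) * n.choose t ≤ κ.choose t * (t - 1).choose ℓ := by
    exact_mod_cast h.card_mul_choose_le ℓ n
  have hγt : (κ.choose t : ℝ) * γ ^ t ≤ n.choose t :=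
    Nat.choose_mul_pow_le_choose_of_le hγ0.le hγ1 (le_of_add_le_right hκ) hn
  have hlamℓ : ((t - 1).choose ℓ : ℝ) * lam ^ ℓ ≤ κ.choose ℓ :=
    hlam ▸ Nat.choose_pred_mul_pow_le_choose hℓt (le_of_add_le_left hκ)
  have hFlam : #F * lam ^ ((ℓ : ℝ) / 2) ≤ κ.choose ℓ := by
    rw [← Real.rpow_neg_div_pow_mul_pow hlam0 (show t ≠ 0 by omega), ← hγ]
    refine le_of_mul_le_mul_right ?_ (Nat.cast_pos.2 (Nat.choose_pos htn))
    calc #F * (γ ^ t * lam ^ ℓ) * n.choose t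
        = (#F * n.choose t) * (γ ^ t * lam ^ ℓ) := by ring
      _ ≤ (κ.choose t * (t - 1).choose ℓ) * (γ ^ t * lam ^ ℓ) := by gcongr
      _ = (κ.choose t * γ ^ t) * ((t - 1).choose ℓ * lam ^ ℓ) := by ring
      _ ≤ n.choose t * κ.choose ℓ := by gcongr
      _ = κ.choose ℓ * n.choose t := mul_comm _ _
  rwa [neg_div, Real.rpow_neg hlam0.le, ← div_eq_mul_inv, le_div_iff₀ (by positivity)]

end SimpleGraph

theorem stmt_10_general {V : Type} [Fintype V] (κ t ℓ : ℕ) (hlt : ℓ < t)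
    (htκ : 16 * t ≤ κ) (H : SimpleGraph V) (hκ : Fintype.card V = κ)
    (hfree : ¬ ∃ A B : Finset V, Disjoint A B ∧ A.card = t ∧ B.card = t ∧
      ∀ a ∈ A, ∀ b ∈ B, H.Adj a b)
    (lam γ x : ℝ)
    (hlam : lam = ((κ : ℝ) - ℓ) / t)
    (hγ : γ = lam ^ (-(ℓ : ℝ) / (2 * t)))
    (hx : x = γ * κ + (1 - γ) * t) :
    (Nat.card {S : Finset V // S.card = ℓ ∧
        x ≤ (Nat.card {v : V | ∀ u ∈ S, H.Adj u v} : ℝ)} : ℝ)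
      ≤ (κ.choose ℓ : ℝ) * (2 : ℝ) ^ (-(ℓ : ℝ) / 2) := by
  classical
  subst hκ
  have hcount : Nat.card {S : Finset V // S.card = ℓ ∧
      x ≤ (Nat.card {v : V | ∀ u ∈ S, H.Adj u v} : ℝ)}
        = #{S : Finset V | #S = ℓ ∧ ⌈x⌉₊ ≤ #(H.commonNbhd S)} := by
    rw [Nat.card_eq_fintype_card, Fintype.card_subtype]
    simp only [SimpleGraph.natCard_setOf_forall_adj, Nat.ceil_le]
  have hrich := SimpleGraph.IsBicliqueFree.card_le_choose_mul_rpow (G := H) hfree hlt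
    (by omega) hlam hγ (n := ⌈x⌉₊) (hx ▸ Nat.le_ceil x)
  have hlam2 : 2 ≤ lam := by
    have ht : (0 : ℝ) < t := by exact_mod_cast (Nat.zero_le ℓ).trans_lt hlt
    have : ((2 * t + ℓ : ℕ) : ℝ) ≤ Fintype.card V := by exact_mod_cast (by omega)
    push_cast at this
    rw [hlam, le_div_iff₀ ht]
    linarith
  rw [hcount]
  refine hrich.trans (mul_le_mul_of_nonneg_left ?_ (Nat.cast_nonneg _))
  exact Real.rpow_le_rpow_of_nonpos two_pos hlam2
    (by simp only [neg_div, Left.neg_nonpos_iff]; positivity)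

/-- In a `K_{t,t}`-free graph `H` on `κ` vertices (with `ℓ < t`, `16t ≤ κ`), letting
`λ = (κ−ℓ)/t`, `γ = λ^(−ℓ/(2t))` and `x = γκ + (1−γ)t`, the number of `ℓ`-element vertex
subsets `S` with `|N(S)| ≥ x` is at most `C(κ,ℓ)·2^(−ℓ/2)`. -/
theorem stmt_10 {V : Type} [Fintype V] (κ t ℓ : ℕ) (hℓ : 0 < ℓ) (hlt : ℓ < t)
    (htκ : 16 * t ≤ κ) (H : SimpleGraph V) (hκ : Fintype.card V = κ)
    (hfree : ¬ ∃ A B : Finset V, Disjoint A B ∧ A.card = t ∧ B.card = t ∧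
      ∀ a ∈ A, ∀ b ∈ B, H.Adj a b)
    (lam γ x : ℝ)
    (hlam : lam = ((κ : ℝ) - ℓ) / t)
    (hγ : γ = lam ^ (-(ℓ : ℝ) / (2 * t)))
    (hx : x = γ * κ + (1 - γ) * t) :
    (Nat.card {S : Finset V // S.card = ℓ ∧
        x ≤ (Nat.card {v : V | ∀ u ∈ S, H.Adj u v} : ℝ)} : ℝ)
      ≤ (κ.choose ℓ : ℝ) * (2 : ℝ) ^ (-(ℓ : ℝ) / 2) :=
  stmt_10_general κ t ℓ hlt htκ H hκ hfree lam γ x hlam hγ hx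
end

section
/- Let κ, t, ℓ be positive integers with ℓ < t and 16t ≤ κ, and set λ = (κ−ℓ)/t and γ = λ^{−ℓ/(2t)} (real powers). Then 1 − γ − 2ℓ/κ ≥ ℓ/(8t). -/
/-! Since `λ ≥ 15 > e`, the power `γ = λ^(-x)` with `x = ℓ/(2t) ∈ [0, 1/2]` is at most
`e^(-x) ≤ 1 - x/2 = 1 - ℓ/(4t)`, while `16t ≤ κ` gives `2ℓ/κ ≤ ℓ/(8t)`. -/

open Real

theorem Real.exp_neg_le_one_sub_half {x : ℝ} (hx₀ : 0 ≤ x) (hx₁ : x ≤ 1) :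
    exp (-x) ≤ 1 - x / 2 := by
  have h_inv : exp (-x) ≤ (1 + x)⁻¹ := by
    rw [exp_neg]
    exact inv_anti₀ (by linarith) (by linarith [add_one_le_exp x])
  calc exp (-x) ≤ (1 + x)⁻¹ := h_inv
    _ ≤ 1 - x / 2 := by
      rw [inv_le_iff_one_le_mul₀' (by linarith)]
      nlinarith

theorem Real.rpow_neg_le_exp_neg {b y : ℝ} (hb : exp 1 ≤ b) (hy : 0 ≤ y) :
    b ^ (-y) ≤ exp (-y) := by
  rw [← exp_one_rpow]
  exact rpow_le_rpow_of_nonpos (exp_pos 1) hb (neg_nonpos.mpr hy)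

theorem stmt_11_general (κ t ℓ : ℕ) (hlt : ℓ < t) (htκ : 16 * t ≤ κ)
    (lam γ : ℝ)
    (hlam : lam = ((κ : ℝ) - ℓ) / t)
    (hγ : γ = lam ^ (-(ℓ : ℝ) / (2 * t))) :
    (ℓ : ℝ) / (8 * t) ≤ 1 - γ - 2 * ℓ / κ := by
  have ht : (0 : ℝ) < t := by exact_mod_cast (Nat.zero_le ℓ).trans_lt hlt
  have hℓt : (ℓ : ℝ) < t := by exact_mod_cast hlt
  have htκ' : 16 * (t : ℝ) ≤ κ := by exact_mod_cast htκ
  have hx₀ : 0 ≤ (ℓ : ℝ) / (2 * t) := by positivity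
  have hx₁ : (ℓ : ℝ) / (2 * t) ≤ 1 := by
    rw [div_le_one (by positivity)]
    linarith
  have hlam_ge : exp 1 ≤ lam := by
    rw [hlam, le_div_iff₀ ht]
    have he : exp 1 ≤ 3 := exp_one_lt_d9.le.trans (by norm_num)
    nlinarith
  have hγ_le : γ ≤ 1 - ℓ / (4 * t) := by
    calc γ ≤ exp (-((ℓ : ℝ) / (2 * t))) := by
          rw [hγ, neg_div]
          exact rpow_neg_le_exp_neg hlam_ge hx₀
      _ ≤ 1 - (ℓ : ℝ) / (2 * t) / 2 := exp_neg_le_one_sub_half hx₀ hx₁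
      _ = 1 - ℓ / (4 * t) := by ring
  have hκ_term : 2 * (ℓ : ℝ) / κ ≤ ℓ / (8 * t) := by
    rw [div_le_div_iff₀ (by linarith) (by positivity)]
    nlinarith [Nat.cast_nonneg (α := ℝ) ℓ]
  have h_split : (ℓ : ℝ) / (4 * t) = ℓ / (8 * t) + ℓ / (8 * t) := by
    field_simp
    ring
  linarith

/-- For positive integers `κ, t, ℓ` with `ℓ < t` and `16t ≤ κ`, setting `λ = (κ−ℓ)/t` and
`γ = λ^(−ℓ/(2t))` (real powers), we have `1 − γ − 2ℓ/κ ≥ ℓ/(8t)`. -/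
theorem stmt_11 (κ t ℓ : ℕ) (hℓ : 0 < ℓ) (hlt : ℓ < t) (htκ : 16 * t ≤ κ)
    (lam γ : ℝ)
    (hlam : lam = ((κ : ℝ) - ℓ) / t)
    (hγ : γ = lam ^ (-(ℓ : ℝ) / (2 * t))) :
    (ℓ : ℝ) / (8 * t) ≤ 1 - γ - 2 * ℓ / κ :=
  stmt_11_general κ t ℓ hlt htκ lam γ hlam hγ
end

section
/- Let κ, t, ℓ be positive integers with ℓ < t and 16t ≤ κ, and let H be a K_{t,t}-free simple graph on κ vertices. Then the number of 2ℓ-element vertex subsets of H that induce a clique is at most (2·e^{−ℓ²/(16t)}) · C(κ,ℓ) · C(κ−ℓ,ℓ) / C(2ℓ,ℓ). -/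
/-!
A `2ℓ`-clique together with an ordering of `ℓ` of its vertices is an injective sequence
`v₁, …, v_ℓ` plus an `ℓ`-subset of the common neighbourhood of the `vᵢ`, so the number of cliques
times `(2ℓ)_ℓ = ℓ! C(2ℓ,ℓ)` is at most `∑_v C(|N(v)|, ℓ)`. Let `X_i` be the common
neighbourhood of `v₁, …, v_{i-1}` and call `vᵢ` heavy if it misses fewer than `(|X_i| - 2t)/t`
vertices of `X_i`. By `K_{t,t}`-freeness fewer than `t` vertices are heavy for any `X`, so at
most `C(ℓ, ℓ/2) t^{ℓ/2} κ^{ℓ/2}` sequences have at least half of their entries heavy. In the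
remaining sequences each of the at least `ℓ/2` light steps removes at least `|X_i|/t - 2`
vertices, which forces `|X_{ℓ+1}| ≤ (1 - ℓ/(8t)) κ` and hence `C(|X_{ℓ+1}|, ℓ) ≤ e^{-ℓ²/(16t)} C(κ - ℓ, ℓ)`.
-/

open Finset
open scoped Classical

namespace Finset

variable {α : Type*}

noncomputable def indexOf (s : Finset α) (a : α) : ℕ :=
  if h : a ∈ s then s.equivFin ⟨a, h⟩ else 0

theorem indexOf_lt {s : Finset α} {a : α} (h : a ∈ s) : s.indexOf a < #s := by
  simp [indexOf, h]

theorem indexOf_injOn (s : Finset α) : Set.InjOn s.indexOf s := by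
  intro a ha b hb hab
  simp only [indexOf, mem_coe.mp ha, mem_coe.mp hb, dite_true] at hab
  simpa using s.equivFin.injective (Fin.ext hab)

/-- The position of each entry in its set of allowed values determines the sequence, since that
set depends only on the earlier entries. -/
theorem card_le_prod_of_forall_mem_prefix {n : ℕ} (C : Fin n → (Fin n → α) → Finset α)
    (b : Fin n → ℕ) (hC : ∀ i f g, (∀ j < i, f j = g j) → C i f = C i g)
    (hb : ∀ i f, #(C i f) ≤ b i) {S : Finset (Fin n → α)} (hS : ∀ f ∈ S, ∀ i, f i ∈ C i f) :
    #S ≤ ∏ i, b i := by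
  calc #S ≤ #(Fintype.piFinset fun i => range (b i)) := by
        refine card_le_card_of_injOn (fun f i => (C i f).indexOf (f i)) ?_ ?_
        · intro f hf
          simp only [mem_coe, Fintype.mem_piFinset, mem_range]
          exact fun i => (indexOf_lt (hS f hf i)).trans_le (hb i f)
        · intro f hf g hg hfg
          funext i
          induction i using WellFoundedLT.induction with
          | ind i ih =>
            have hCi := hC i f g ih
            refine indexOf_injOn (C i f) (hS f hf i) (hCi ▸ hS g hg i) ?_
            simpa [hCi] using congrFun hfg i
    _ = ∏ i, b i := by simp

theorem descFactorial_card_le_card_embedding [Fintype α] (S : Finset α) (ℓ : ℕ) :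
    (#S).descFactorial ℓ ≤ #{f : Fin ℓ ↪ α | ∀ i, f i ∈ S} := by
  calc (#S).descFactorial ℓ = #(univ : Finset (Fin ℓ ↪ S)) := by
        rw [card_univ, Fintype.card_embedding_eq, Fintype.card_fin, Fintype.card_coe]
    _ ≤ _ := card_le_card_of_injOn (fun g => g.trans (Function.Embedding.subtype _))
        (fun g _ => by simp)
        (fun g _ h _ hgh => DFunLike.ext _ _ fun i => Subtype.ext (DFunLike.congr_fun hgh i))

end Finset

namespace Nat

theorem descFactorial_mul_pow_le {y n : ℕ} (h : y ≤ n) (k : ℕ) :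
    y.descFactorial k * n ^ k ≤ n.descFactorial k * y ^ k := by
  induction k with
  | zero => simp
  | succ k ih =>
    have hstep : (y - k) * n ≤ (n - k) * y := by
      rw [Nat.sub_mul, Nat.sub_mul, mul_comm y n]
      have := Nat.mul_le_mul_left k h
      omega
    rw [descFactorial_succ, descFactorial_succ, pow_succ, pow_succ]
    calc (y - k) * y.descFactorial k * (n ^ k * n)
        = ((y - k) * n) * (y.descFactorial k * n ^ k) := by ring
      _ ≤ ((n - k) * y) * (n.descFactorial k * y ^ k) := Nat.mul_le_mul hstep ih
      _ = (n - k) * n.descFactorial k * (y ^ k * y) := by ring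

theorem choose_mul_pow_le {y n : ℕ} (h : y ≤ n) (k : ℕ) :
    y.choose k * n ^ k ≤ n.choose k * y ^ k := by
  have := descFactorial_mul_pow_le h k
  rw [descFactorial_eq_factorial_mul_choose, descFactorial_eq_factorial_mul_choose,
    mul_assoc, mul_assoc] at this
  exact Nat.le_of_mul_le_mul_left this k.factorial_pos

theorem two_pow_mul_choose_mul_pow_le {ℓ m t κ : ℕ} (hm : ℓ ≤ 2 * m) (hmℓ : m ≤ ℓ)
    (htκ : 16 * t ≤ κ) : 2 ^ ℓ * (ℓ.choose m * (t ^ m * κ ^ (ℓ - m))) ≤ κ ^ ℓ :=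
  calc 2 ^ ℓ * (ℓ.choose m * (t ^ m * κ ^ (ℓ - m)))
      ≤ 2 ^ ℓ * (2 ^ ℓ * (t ^ m * κ ^ (ℓ - m))) := by gcongr; exact choose_le_two_pow ℓ m
    _ = 4 ^ ℓ * t ^ m * κ ^ (ℓ - m) := by rw [← mul_assoc, ← mul_pow, ← mul_assoc]; norm_num
    _ ≤ 4 ^ (2 * m) * t ^ m * κ ^ (ℓ - m) := by gcongr; norm_num
    _ = (16 * t) ^ m * κ ^ (ℓ - m) := by rw [pow_mul, mul_pow]; norm_num
    _ ≤ κ ^ m * κ ^ (ℓ - m) := by gcongr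
    _ = κ ^ ℓ := by rw [← pow_add, Nat.add_sub_cancel' hmℓ]

end Nat

namespace Real

theorem choose_le_exp_mul_choose {y n k : ℕ} {c : ℝ} (hn : 0 < n) (hyn : y ≤ n)
    (hy : (y : ℝ) ≤ (1 - c) * n) : (y.choose k : ℝ) ≤ exp (-(c * k)) * n.choose k := by
  have hc : 0 ≤ 1 - c := nonneg_of_mul_nonneg_left ((Nat.cast_nonneg y).trans hy)
    (by exact_mod_cast hn)
  have key : (y.choose k : ℝ) * n ^ k ≤ (exp (-(c * k)) * n.choose k) * n ^ k :=
    calc (y.choose k : ℝ) * n ^ k ≤ n.choose k * (y : ℝ) ^ k := by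
          exact_mod_cast Nat.choose_mul_pow_le hyn k
      _ ≤ n.choose k * ((1 - c) * n) ^ k := by gcongr
      _ ≤ n.choose k * (exp (-c) * n) ^ k := by gcongr; exact one_sub_le_exp_neg c
      _ = (exp (-(c * k)) * n.choose k) * n ^ k := by
          rw [mul_pow, ← exp_nat_mul]; ring_nf
  exact le_of_mul_le_mul_right key (by positivity)

theorem pow_le_two_pow_mul_exp_mul_descFactorial {ℓ t κ : ℕ} (hℓt : ℓ ≤ t) (ht : 0 < t)
    (htκ : 16 * t ≤ κ) :
    (κ : ℝ) ^ ℓ ≤ 2 ^ ℓ * exp (-(ℓ : ℝ) ^ 2 / (16 * t)) * κ.descFactorial ℓ := by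
  have hℓt' : (ℓ : ℝ) ≤ t := by exact_mod_cast hℓt
  have htκ' : 16 * (t : ℝ) ≤ κ := by exact_mod_cast htκ
  have hexp : exp (-(1 / 16)) ^ ℓ ≤ exp (-(ℓ : ℝ) ^ 2 / (16 * t)) := by
    rw [← exp_nat_mul, exp_le_exp, le_div_iff₀ (by positivity)]
    nlinarith
  have hdesc : ((15 / 16) * (κ : ℝ)) ^ ℓ ≤ κ.descFactorial ℓ := by
    calc ((15 / 16) * (κ : ℝ)) ^ ℓ ≤ ((κ + 1 - ℓ : ℕ) : ℝ) ^ ℓ := by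
          gcongr
          rw [Nat.cast_sub (by omega)]
          push_cast
          linarith
      _ ≤ κ.descFactorial ℓ := by exact_mod_cast Nat.pow_sub_le_descFactorial κ ℓ
  have hbase : (κ : ℝ) ≤ 2 * exp (-(1 / 16)) * ((15 / 16) * κ) := by
    have := one_sub_le_exp_neg (1 / 16)
    nlinarith [(Nat.cast_nonneg κ : (0 : ℝ) ≤ κ)]
  calc (κ : ℝ) ^ ℓ ≤ (2 * exp (-(1 / 16)) * ((15 / 16) * κ)) ^ ℓ := by gcongr
    _ = 2 ^ ℓ * exp (-(1 / 16)) ^ ℓ * ((15 / 16) * κ) ^ ℓ := by rw [mul_pow, mul_pow]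
    _ ≤ 2 ^ ℓ * exp (-(ℓ : ℝ) ^ 2 / (16 * t)) * κ.descFactorial ℓ := by gcongr

end Real

namespace SimpleGraph

variable {V : Type*} (G : SimpleGraph V)

def BicliqueFree (t : ℕ) : Prop :=
  ¬ ∃ A B : Finset V, Disjoint A B ∧ A.card = t ∧ B.card = t ∧ ∀ a ∈ A, ∀ b ∈ B, G.Adj a b

variable [Fintype V]

noncomputable def prefixNbhd {ℓ : ℕ} (f : Fin ℓ → V) (i : ℕ) : Finset V :=
  {v | ∀ j : Fin ℓ, (j : ℕ) < i → G.Adj (f j) v}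

noncomputable def heavyVerts (t : ℕ) (X : Finset V) : Finset V :=
  {v | t * #{w ∈ X | ¬ G.Adj v w} + 2 * t < #X}

noncomputable def heavyIndices (t : ℕ) {ℓ : ℕ} (f : Fin ℓ → V) : Finset (Fin ℓ) :=
  {i | f i ∈ G.heavyVerts t (G.prefixNbhd f i)}

variable {G} {t ℓ : ℕ}

/-- `t` heavy vertices miss fewer than `#X - 2t` vertices of `X` altogether, so `t` vertices of
`X` outside them are adjacent to all of them. -/
theorem card_heavyVerts_lt (hG : G.BicliqueFree t) (ht : 0 < t) (X : Finset V) :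
    #(G.heavyVerts t X) < t := by
  by_contra! hcard
  obtain ⟨A, hAheavy, hA⟩ := exists_subset_card_eq hcard
  set D := A.biUnion fun v => {w ∈ X | ¬ G.Adj v w}
  have hD : #D + 2 * t < #X := by
    have hsum : ∑ v ∈ A, (t * #{w ∈ X | ¬ G.Adj v w} + 2 * t) < ∑ _v ∈ A, #X :=
      sum_lt_sum_of_nonempty (card_pos.mp (hA ▸ ht)) fun v hv => by
        simpa [heavyVerts] using hAheavy hv
    rw [sum_add_distrib, ← mul_sum, sum_const, sum_const, hA, smul_eq_mul, smul_eq_mul] at hsum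
    have : #D ≤ ∑ v ∈ A, #{w ∈ X | ¬ G.Adj v w} := card_biUnion_le
    nlinarith
  have hB : t ≤ #((X \ D) \ A) := by
    have h1 := le_card_sdiff D X
    have h2 := le_card_sdiff A (X \ D)
    omega
  obtain ⟨B, hBsub, hB⟩ := exists_subset_card_eq hB
  refine hG ⟨A, B, disjoint_of_subset_right hBsub disjoint_sdiff, hA, hB, fun a ha b hb => ?_⟩
  have hb' := hBsub hb
  simp only [mem_sdiff, D, mem_biUnion, mem_filter, not_exists, not_and] at hb'
  by_contra hab
  exact hb'.1.2 a ha hb'.1.1 hab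

theorem prefixNbhd_congr {f g : Fin ℓ → V} {i : ℕ} (h : ∀ j : Fin ℓ, (j : ℕ) < i → f j = g j) :
    G.prefixNbhd f i = G.prefixNbhd g i :=
  filter_congr fun v _ => forall_congr' fun j => imp_congr_right fun hj => by rw [h j hj]

theorem prefixNbhd_antitone (f : Fin ℓ → V) : Antitone (G.prefixNbhd f) :=
  fun _ _ hij _ hv => mem_filter.mpr
    ⟨mem_univ _, fun j hj => (mem_filter.mp hv).2 j (hj.trans_le hij)⟩

theorem prefixNbhd_zero (f : Fin ℓ → V) : G.prefixNbhd f 0 = univ := by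
  simp [prefixNbhd]

theorem prefixNbhd_succ (f : Fin ℓ → V) {i : ℕ} (hi : i < ℓ) :
    G.prefixNbhd f (i + 1) = {w ∈ G.prefixNbhd f i | G.Adj (f ⟨i, hi⟩) w} := by
  ext v
  simp only [prefixNbhd, mem_filter, mem_univ, true_and, Nat.lt_succ_iff_lt_or_eq]
  refine ⟨fun hv => ⟨fun j hj => hv j (.inl hj), hv _ (.inr rfl)⟩, ?_⟩
  rintro ⟨hv, hadj⟩ j (hj | hj)
  · exact hv j hj
  · exact (Fin.ext hj : j = ⟨i, hi⟩) ▸ hadj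

theorem card_prefixNbhd_add_sum_sub (f : Fin ℓ → V) (n : ℕ) :
    #(G.prefixNbhd f n) + ∑ i ∈ range n, (#(G.prefixNbhd f i) - #(G.prefixNbhd f (i + 1))) =
      Fintype.card V := by
  induction n with
  | zero => simp [prefixNbhd_zero]
  | succ n ih =>
    have := card_le_card (prefixNbhd_antitone (G := G) f (Nat.le_add_right n 1))
    rw [sum_range_succ]
    omega

theorem card_prefixNbhd_le_of_notMem_heavyVerts {f : Fin ℓ → V} {i : ℕ} (hi : i < ℓ)
    (hlight : f ⟨i, hi⟩ ∉ G.heavyVerts t (G.prefixNbhd f i)) :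
    #(G.prefixNbhd f i) ≤ t * (#(G.prefixNbhd f i) - #(G.prefixNbhd f (i + 1))) + 2 * t := by
  have hsplit := card_filter_add_card_filter_not (s := G.prefixNbhd f i) (G.Adj (f ⟨i, hi⟩))
  rw [← prefixNbhd_succ f hi] at hsplit
  simp only [heavyVerts, mem_filter, mem_univ, true_and, not_lt] at hlight
  rwa [← hsplit, Nat.add_sub_cancel_left, hsplit]

theorem card_prefixNbhd_le_of_few_heavy (hℓt : ℓ ≤ t) (htκ : 16 * t ≤ Fintype.card V)
    {f : Fin ℓ → V} (hfew : 2 * #(G.heavyIndices t f) ≤ ℓ) :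
    8 * t * #(G.prefixNbhd f ℓ) + Fintype.card V * ℓ ≤ 8 * t * Fintype.card V := by
  set x := #(G.prefixNbhd f ℓ)
  set d := fun i : ℕ => #(G.prefixNbhd f i) - #(G.prefixNbhd f (i + 1))
  set L := univ \ G.heavyIndices t f
  have hL : #L + #(G.heavyIndices t f) = ℓ := by
    rw [card_sdiff_of_subset (subset_univ _), card_univ, Fintype.card_fin]
    have := card_le_univ (G.heavyIndices t f)
    rw [Fintype.card_fin] at this
    omega
  have htel : x + ∑ i : Fin ℓ, d i = Fintype.card V := by
    rw [Fin.sum_univ_eq_sum_range d]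
    exact card_prefixNbhd_add_sum_sub f ℓ
  have hsum : #L * x ≤ t * ∑ i : Fin ℓ, d i + 2 * t * #L := by
    calc #L * x = ∑ _i ∈ L, x := by rw [sum_const, smul_eq_mul]
      _ ≤ ∑ i ∈ L, (t * d i + 2 * t) := sum_le_sum fun i hi => by
          have hlight : f i ∉ G.heavyVerts t (G.prefixNbhd f i) := by
            simpa [L, heavyIndices] using hi
          exact (card_le_card (prefixNbhd_antitone f i.isLt.le)).trans
            (card_prefixNbhd_le_of_notMem_heavyVerts i.isLt hlight)
      _ = t * ∑ i ∈ L, d i + 2 * t * #L := by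
          rw [sum_add_distrib, ← mul_sum, sum_const, smul_eq_mul, mul_comm #L]
      _ ≤ t * ∑ i : Fin ℓ, d i + 2 * t * #L := by
          gcongr
          exact subset_univ L
  have hLt : #L ≤ t := by omega
  rw [← htel] at htκ ⊢
  nlinarith [Nat.mul_le_mul_right (∑ i : Fin ℓ, d i) hLt, Nat.mul_le_mul_right #L htκ,
    Nat.mul_le_mul_left (x + ∑ i : Fin ℓ, d i) (by omega : ℓ ≤ 2 * #L)]

theorem card_filter_subset_heavyIndices_le (hG : G.BicliqueFree t) (ht : 0 < t)
    (P : Finset (Fin ℓ)) :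
    #{f : Fin ℓ ↪ V | P ⊆ G.heavyIndices t f} ≤ (t - 1) ^ #P * Fintype.card V ^ (ℓ - #P) := by
  rw [← card_map ⟨_, DFunLike.coe_injective⟩]
  calc _ ≤ ∏ i : Fin ℓ, if i ∈ P then t - 1 else Fintype.card V := by
        refine card_le_prod_of_forall_mem_prefix
          (fun i f => if i ∈ P then G.heavyVerts t (G.prefixNbhd f i) else univ) _
          (fun i f g hfg => by simp only [prefixNbhd_congr fun j hj => hfg j hj]) ?_ ?_
        · intro i f
          split_ifs
          · exact Nat.le_sub_one_of_lt (card_heavyVerts_lt hG ht _)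
          · exact (card_univ).le
        · simp only [mem_map, mem_filter, mem_univ, true_and, Function.Embedding.coeFn_mk]
          rintro _ ⟨f, hP, rfl⟩ i
          split_ifs with hi
          · simpa [heavyIndices] using hP hi
          · exact mem_univ _
    _ = _ := by
        rw [prod_ite, prod_const, prod_const, filter_mem_eq_inter, univ_inter, filter_not,
          filter_mem_eq_inter, univ_inter, card_sdiff_of_subset (subset_univ P), card_univ,
          Fintype.card_fin]

theorem card_filter_le_card_heavyIndices_le (hG : G.BicliqueFree t) (ht : 0 < t) (m : ℕ) :
    #{f : Fin ℓ ↪ V | m ≤ #(G.heavyIndices t f)} ≤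
      ℓ.choose m * ((t - 1) ^ m * Fintype.card V ^ (ℓ - m)) := by
  have hcover : ({f : Fin ℓ ↪ V | m ≤ #(G.heavyIndices t f)} : Finset _) ⊆
      (powersetCard m univ).biUnion fun P => {f : Fin ℓ ↪ V | P ⊆ G.heavyIndices t f} := by
    intro f hf
    obtain ⟨P, hP, hPm⟩ := exists_subset_card_eq (mem_filter.mp hf).2
    exact mem_biUnion.mpr ⟨P, mem_powersetCard.mpr ⟨subset_univ P, hPm⟩, by simpa using hP⟩
  calc _ ≤ _ := card_le_card hcover
    _ ≤ _ := card_biUnion_le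
    _ ≤ ∑ _P ∈ powersetCard m (univ : Finset (Fin ℓ)), (t - 1) ^ m * Fintype.card V ^ (ℓ - m) :=
        sum_le_sum fun P hP =>
          (mem_powersetCard.mp hP).2 ▸ card_filter_subset_heavyIndices_le hG ht P
    _ = _ := by rw [sum_const, card_powersetCard, card_univ, Fintype.card_fin, smul_eq_mul]

theorem disjoint_prefixNbhd_map (f : Fin ℓ ↪ V) : Disjoint (G.prefixNbhd f ℓ) (univ.map f) := by
  rw [Finset.disjoint_left]
  simp only [prefixNbhd, mem_filter, mem_map, mem_univ, true_and, not_exists]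
  rintro _ hv i rfl
  exact G.irrefl (hv i i.isLt)

theorem card_prefixNbhd_le (f : Fin ℓ ↪ V) : #(G.prefixNbhd f ℓ) ≤ Fintype.card V - ℓ := by
  have := card_union_of_disjoint (disjoint_prefixNbhd_map (G := G) f)
  rw [card_map, card_univ, Fintype.card_fin] at this
  have := card_le_univ (G.prefixNbhd f ℓ ∪ univ.map f)
  omega

theorem card_cliques_mul_descFactorial_le (ℓ : ℕ) :
    #{S : Finset V | #S = 2 * ℓ ∧ G.IsClique (S : Set V)} * (2 * ℓ).descFactorial ℓ ≤
      ∑ f : Fin ℓ ↪ V, (#(G.prefixNbhd f ℓ)).choose ℓ := by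
  set K : Finset (Finset V) := {S | #S = 2 * ℓ ∧ G.IsClique (S : Set V)}
  calc #K * (2 * ℓ).descFactorial ℓ
      ≤ #(K.sigma fun S => ({f : Fin ℓ ↪ V | ∀ i, f i ∈ S} : Finset _)) := by
        rw [card_sigma, ← smul_eq_mul, ← sum_const]
        refine sum_le_sum fun S hS => ?_
        rw [← (mem_filter.mp hS).2.1]
        exact S.descFactorial_card_le_card_embedding ℓ
    _ ≤ #(univ.sigma fun f : Fin ℓ ↪ V => (G.prefixNbhd f ℓ).powersetCard ℓ) := by
        refine card_le_card_of_injOn (fun p => ⟨p.2, p.1 \ univ.map p.2⟩) ?_ ?_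
        · rintro ⟨S, f⟩ hp
          simp only [K, coe_sigma, Set.mem_sigma_iff, mem_coe, mem_filter, mem_univ,
            true_and] at hp
          obtain ⟨⟨hcard, hclique⟩, hf⟩ := hp
          have hfS : univ.map f ⊆ S := by simpa [subset_iff] using hf
          simp only [coe_sigma, Set.mem_sigma_iff, mem_coe, mem_univ, true_and,
            mem_powersetCard]
          refine ⟨fun v hv => ?_, ?_⟩
          · simp only [mem_sdiff, mem_map, mem_univ, true_and, not_exists] at hv
            simp only [prefixNbhd, mem_filter, mem_univ, true_and]
            exact fun j _ => hclique (hf j) hv.1 fun h => hv.2 j h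
          · rw [card_sdiff_of_subset hfS, hcard, card_map, card_univ, Fintype.card_fin]
            omega
        · rintro ⟨S, f⟩ hp ⟨S', f'⟩ hp' hpp'
          simp only [Sigma.mk.injEq] at hpp'
          obtain ⟨rfl, hdiff⟩ := hpp'
          simp only [K, coe_sigma, Set.mem_sigma_iff, mem_coe, mem_filter, mem_univ,
            true_and] at hp hp'
          have hS : univ.map f ⊆ S := by simpa [subset_iff] using hp.2
          have hS' : univ.map f ⊆ S' := by simpa [subset_iff] using hp'.2
          rw [← union_sdiff_of_subset hS, ← union_sdiff_of_subset hS', eq_of_heq hdiff]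
    _ = ∑ f : Fin ℓ ↪ V, (#(G.prefixNbhd f ℓ)).choose ℓ := by
        simp only [card_sigma, card_powersetCard]

theorem card_filter_half_le_card_heavyIndices_le (hG : G.BicliqueFree t) (hℓt : ℓ < t)
    (htκ : 16 * t ≤ Fintype.card V) :
    (#{f : Fin ℓ ↪ V | (ℓ + 1) / 2 ≤ #(G.heavyIndices t f)} : ℝ) ≤
      Real.exp (-(ℓ : ℝ) ^ 2 / (16 * t)) * (Fintype.card V).descFactorial ℓ := by
  have hcount := card_filter_le_card_heavyIndices_le (V := V) (ℓ := ℓ) hG (by omega) ((ℓ + 1) / 2)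
  have hnum := Nat.two_pow_mul_choose_mul_pow_le (t := t - 1) (by omega : ℓ ≤ 2 * ((ℓ + 1) / 2))
    (by omega) (by omega : 16 * (t - 1) ≤ Fintype.card V)
  have hpow : (2 : ℝ) ^ ℓ * #{f : Fin ℓ ↪ V | (ℓ + 1) / 2 ≤ #(G.heavyIndices t f)} ≤
      2 ^ ℓ * (Real.exp (-(ℓ : ℝ) ^ 2 / (16 * t)) * (Fintype.card V).descFactorial ℓ) := by
    rw [← mul_assoc]
    refine le_trans ?_ (Real.pow_le_two_pow_mul_exp_mul_descFactorial hℓt.le (by omega) htκ)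
    exact_mod_cast (Nat.mul_le_mul_left _ hcount).trans hnum
  exact le_of_mul_le_mul_left hpow (by positivity)

theorem choose_card_prefixNbhd_le_of_few_heavy (hℓt : ℓ < t) (htκ : 16 * t ≤ Fintype.card V)
    {f : Fin ℓ ↪ V} (hfew : 2 * #(G.heavyIndices t f) ≤ ℓ) :
    ((#(G.prefixNbhd f ℓ)).choose ℓ : ℝ) ≤
      Real.exp (-(ℓ : ℝ) ^ 2 / (16 * t)) * (Fintype.card V - ℓ).choose ℓ := by
  have hsmall := card_prefixNbhd_le_of_few_heavy hℓt.le htκ hfew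
  have ht : (0 : ℝ) < t := by exact_mod_cast (by omega : 0 < t)
  convert Real.choose_le_exp_mul_choose (c := ℓ / (16 * t)) (by omega) (card_prefixNbhd_le f)
    ?_ using 3
  · field_simp
  · have hsmall' : 8 * (t : ℝ) * #(G.prefixNbhd f ℓ) + Fintype.card V * ℓ ≤
        8 * t * Fintype.card V := by exact_mod_cast hsmall
    have htκ' : 16 * (t : ℝ) ≤ Fintype.card V := by exact_mod_cast htκ
    rw [Nat.cast_sub (by omega), one_sub_div (by positivity), div_mul_eq_mul_div,
      le_div_iff₀ (by positivity)]
    nlinarith [(Nat.cast_nonneg ℓ : (0 : ℝ) ≤ ℓ)]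

theorem sum_choose_card_prefixNbhd_le (hG : G.BicliqueFree t) (hℓt : ℓ < t)
    (htκ : 16 * t ≤ Fintype.card V) :
    ∑ f : Fin ℓ ↪ V, ((#(G.prefixNbhd f ℓ)).choose ℓ : ℝ) ≤
      2 * Real.exp (-(ℓ : ℝ) ^ 2 / (16 * t)) * (Fintype.card V).descFactorial ℓ *
        (Fintype.card V - ℓ).choose ℓ := by
  set E := Real.exp (-(ℓ : ℝ) ^ 2 / (16 * t))
  set C := (((Fintype.card V - ℓ).choose ℓ : ℕ) : ℝ) with hC
  set many : (Fin ℓ ↪ V) → Prop := fun f => (ℓ + 1) / 2 ≤ #(G.heavyIndices t f)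
  have hmany : ∑ f with many f, ((#(G.prefixNbhd f ℓ)).choose ℓ : ℝ) ≤
      E * (Fintype.card V).descFactorial ℓ * C :=
    calc _ ≤ ∑ f with many f, C := sum_le_sum fun f _ => by
          rw [hC]
          exact_mod_cast Nat.choose_le_choose ℓ (card_prefixNbhd_le f)
      _ ≤ _ := by
          rw [sum_const, nsmul_eq_mul]
          gcongr
          exact card_filter_half_le_card_heavyIndices_le hG hℓt htκ
  have hfew : ∑ f with ¬ many f, ((#(G.prefixNbhd f ℓ)).choose ℓ : ℝ) ≤
      (Fintype.card V).descFactorial ℓ * (E * C) :=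
    calc _ ≤ ∑ f with ¬ many f, E * C := sum_le_sum fun f hf =>
          choose_card_prefixNbhd_le_of_few_heavy hℓt htκ
            (by simp only [many, mem_filter] at hf; omega)
      _ ≤ _ := by
          rw [sum_const, nsmul_eq_mul]
          gcongr
          refine (card_filter_le _ _).trans_eq ?_
          rw [card_univ, Fintype.card_embedding_eq, Fintype.card_fin]
  rw [← sum_filter_add_sum_filter_not univ many]
  linarith

end SimpleGraph

theorem stmt_13_general {V : Type} [Fintype V] (κ t ℓ : ℕ) (hlt : ℓ < t)
    (htκ : 16 * t ≤ κ) (H : SimpleGraph V) (hκ : Fintype.card V = κ)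
    (hfree : ¬ ∃ A B : Finset V, Disjoint A B ∧ A.card = t ∧ B.card = t ∧
      ∀ a ∈ A, ∀ b ∈ B, H.Adj a b) :
    (Nat.card {S : Finset V // S.card = 2 * ℓ ∧ H.IsClique (S : Set V)} : ℝ)
      ≤ 2 * Real.exp (-(ℓ : ℝ) ^ 2 / (16 * t)) * (κ.choose ℓ) * ((κ - ℓ).choose ℓ)
          / ((2 * ℓ).choose ℓ) := by
  subst hκ
  have hcount := (Nat.cast_le (α := ℝ)).mpr (H.card_cliques_mul_descFactorial_le ℓ)
  push_cast at hcount
  have hbound := hcount.trans (SimpleGraph.sum_choose_card_prefixNbhd_le hfree hlt htκ)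
  simp only [Nat.descFactorial_eq_factorial_mul_choose, Nat.cast_mul] at hbound
  rw [Nat.card_eq_fintype_card, Fintype.card_subtype,
    le_div_iff₀ (by exact_mod_cast Nat.choose_pos (by omega))]
  exact le_of_mul_le_mul_left (by linarith) (by positivity : (0 : ℝ) < ℓ.factorial)

/-- In a `K_{t,t}`-free graph `H` on `κ` vertices (with `ℓ < t`, `16t ≤ κ`), the number of
`2ℓ`-element vertex subsets inducing a clique is at most
`(2·e^(−ℓ²/(16t)))·C(κ,ℓ)·C(κ−ℓ,ℓ)/C(2ℓ,ℓ)`. -/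
theorem stmt_13 {V : Type} [Fintype V] (κ t ℓ : ℕ) (hℓ : 0 < ℓ) (hlt : ℓ < t)
    (htκ : 16 * t ≤ κ) (H : SimpleGraph V) (hκ : Fintype.card V = κ)
    (hfree : ¬ ∃ A B : Finset V, Disjoint A B ∧ A.card = t ∧ B.card = t ∧
      ∀ a ∈ A, ∀ b ∈ B, H.Adj a b) :
    (Nat.card {S : Finset V // S.card = 2 * ℓ ∧ H.IsClique (S : Set V)} : ℝ)
      ≤ 2 * Real.exp (-(ℓ : ℝ) ^ 2 / (16 * t)) * (κ.choose ℓ) * ((κ - ℓ).choose ℓ)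
          / ((2 * ℓ).choose ℓ) :=
  stmt_13_general κ t ℓ hlt htκ H hκ hfree
end
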